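/- arXiv:0809.3117 — 8 statements merged into one kernel-verified Lean document; each statement's English description precedes it below -/
import Mathlib

section
/- If D is a non-trivial Steiner t-design with parameters t-(v,k,1), then v ≥ (t+1)(k-t+1). -/
open Finset

/-- A `t`-`(v,k,λ)` design: a finite incidence structure with point type `X`,
block type `B`, incidence relation `I`, such that `|X| = v`, every block is
incident with exactly `k` points, and every `t`-subset of points is incident
with exactly `l` blocks (for positive integers `t ≤ k ≤ v` and `l`). -/
def IsDesign (X B : Type*) [Fintype X] [Fintype B] (I : X → B → Prop)
    [∀ x b, Decidable (I x b)] (t v k l : ℕ) : Prop :=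
  0 < t ∧ t ≤ k ∧ k ≤ v ∧ 0 < l ∧
  Fintype.card X = v ∧
  (∀ b : B, (Finset.univ.filter fun x => I x b).card = k) ∧
  (∀ S : Finset X, S.card = t →
    (Finset.univ.filter fun b : B => ∀ x ∈ S, I x b).card = l)

/-- Tits' bound: a non-trivial Steiner t-design satisfies v ≥ (t+1)(k-t+1). -/
theorem stmt5 {X B : Type*} [Fintype X] [Fintype B] (I : X → B → Prop)
    [∀ x b, Decidable (I x b)] {t v k : ℕ} (hD : IsDesign X B I t v k 1)
    (hk : t < k) (hv : k < v) :
    v ≥ (t + 1) * (k - t + 1) := by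
  classical
  obtain ⟨ht, htk, hkv, -, hcardX, hPb, hSb⟩ := hD
  set P : B → Finset X := fun b => univ.filter fun x => I x b with hPdef
  have hPcard : ∀ b, (P b).card = k := hPb
  -- unique block through a t-set
  have hblk : ∀ S : Finset X, S.card = t → ∃! b : B, S ⊆ P b := by
    intro S hSc
    obtain ⟨b, hb⟩ := Finset.card_eq_one.mp (hSb S hSc)
    obtain ⟨hbmem, hbu⟩ := Finset.eq_singleton_iff_unique_mem.mp hb
    simp only [mem_filter, mem_univ, true_and] at hbmem hbu
    refine ⟨b, ?_, ?_⟩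
    · intro x hx
      exact mem_filter.mpr ⟨mem_univ x, hbmem x hx⟩
    · intro b' hb'
      exact hbu b' fun x hx => (mem_filter.mp (hb' hx)).2
  have huniq : ∀ S : Finset X, S.card = t → ∀ b b', S ⊆ P b → S ⊆ P b' → b = b' := by
    intro S hSc b b' h1 h2
    obtain ⟨c, -, hc⟩ := hblk S hSc
    rw [hc b h1, hc b' h2]
  -- pick a t-set S0, its block b0, and a point y outside b0
  obtain ⟨S0, -, hS0⟩ := Finset.exists_subset_card_eq
    (show t ≤ (univ : Finset X).card by rw [Finset.card_univ, hcardX]; omega)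
  obtain ⟨b0, hb0, -⟩ := hblk S0 hS0
  have : Nonempty B := ⟨b0⟩
  obtain ⟨y, hy⟩ : ∃ y, y ∉ P b0 := by
    by_contra h
    push_neg at h
    have huu : P b0 = univ := Finset.eq_univ_iff_forall.mpr h
    have : k = v := by rw [← hPcard b0, huu, card_univ, hcardX]
    omega
  have hyS0 : y ∉ S0 := fun h => hy (hb0 h)
  set E : Finset X := insert y S0 with hEdef
  have hEcard : E.card = t + 1 := by rw [hEdef, card_insert_of_notMem hyS0, hS0]
  have herase : ∀ x ∈ E, (E.erase x).card = t := by
    intro x hx; rw [card_erase_of_mem hx, hEcard]; omega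
  have hex : ∀ x ∈ E, ∃ b, E.erase x ⊆ P b := fun x hx => (hblk _ (herase x hx)).exists
  choose! f hf using hex
  -- x is not a point of f x
  have hxnot : ∀ x ∈ E, x ∉ P (f x) := by
    intro x hx hxP
    have hEsub : E ⊆ P (f x) := by
      intro z hz
      rcases eq_or_ne z x with rfl | hzx
      · exact hxP
      · exact hf x hx (mem_erase.mpr ⟨hzx, hz⟩)
    have hS0sub : S0 ⊆ P (f x) := fun z hz => hEsub (mem_insert_of_mem hz)
    have heq : f x = b0 := huniq S0 hS0 _ _ hS0sub hb0
    exact hy (heq ▸ hEsub (mem_insert_self y S0))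
  -- points outside E in distinct blocks are distinct
  have hkey : ∀ x ∈ E, ∀ x' ∈ E, x ≠ x' →
      ∀ z, z ∈ P (f x) \ E → z ∈ P (f x') \ E → False := by
    intro x hx x' hx' hne z hz hz'
    obtain ⟨hz1, hz2⟩ := mem_sdiff.mp hz
    obtain ⟨hz1', -⟩ := mem_sdiff.mp hz'
    have hx'm : x' ∈ E.erase x := mem_erase.mpr ⟨hne.symm, hx'⟩
    set T : Finset X := insert z ((E.erase x).erase x') with hT
    have h1 : ((E.erase x).erase x').card = t - 1 := by
      rw [card_erase_of_mem hx'm, herase x hx]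
    have hTcard : T.card = t := by
      rw [hT, card_insert_of_notMem
        (fun h => hz2 (mem_of_mem_erase (mem_of_mem_erase h))), h1]
      omega
    have hTx : T ⊆ P (f x) := by
      intro w hw
      rcases mem_insert.mp hw with rfl | hw'
      · exact hz1
      · exact hf x hx (mem_of_mem_erase hw')
    have hTx' : T ⊆ P (f x') := by
      intro w hw
      rcases mem_insert.mp hw with rfl | hw'
      · exact hz1'
      · obtain ⟨hwx', hwE⟩ := mem_erase.mp hw'
        exact hf x' hx' (mem_erase.mpr ⟨hwx', mem_of_mem_erase hwE⟩)
    have heq : f x = f x' := huniq T hTcard _ _ hTx hTx'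
    exact hxnot x' hx' (heq ▸ hf x hx hx'm)
  -- each block contributes k - t points outside E
  have hcnt : ∀ x ∈ E, (P (f x) \ E).card = k - t := by
    intro x hx
    have hintE : P (f x) ∩ E = E.erase x := by
      apply subset_antisymm
      · intro z hz
        obtain ⟨hz1, hz2⟩ := mem_inter.mp hz
        exact mem_erase.mpr ⟨fun h => hxnot x hx (h ▸ hz1), hz2⟩
      · intro z hz
        exact mem_inter.mpr ⟨hf x hx hz, mem_of_mem_erase hz⟩
    have hca := Finset.card_sdiff_add_card_inter (P (f x)) E
    rw [hintE, herase x hx, hPcard] at hca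
    omega
  have hU : (E.biUnion fun x => P (f x) \ E).card = (t + 1) * (k - t) := by
    rw [Finset.card_biUnion (fun x hx y hy' hne =>
      Finset.disjoint_left.mpr fun z hz hz' => hkey x hx y hy' hne z hz hz')]
    rw [Finset.sum_congr rfl hcnt, Finset.sum_const, hEcard, smul_eq_mul]
  have hdisjEU : Disjoint E (E.biUnion fun x => P (f x) \ E) := by
    apply Finset.disjoint_left.mpr
    intro z hz hz'
    obtain ⟨x, hx, hzx⟩ := mem_biUnion.mp hz'
    exact (mem_sdiff.mp hzx).2 hz
  have hle : E.card + (E.biUnion fun x => P (f x) \ E).card ≤ v := by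
    rw [← card_union_of_disjoint hdisjEU, ← hcardX, ← card_univ]
    exact card_le_card (subset_univ _)
  rw [hEcard, hU] at hle
  have hring : (t + 1) * (k - t + 1) = (t + 1) * (k - t) + (t + 1) := by ring
  omega
end

section
/- If D is a non-trivial Steiner t-design with t > 2 and parameters t-(v,k,1), then v - t + 1 ≥ (k-t+2)(k-t+1). -/
open Finset

/-- Cameron's bound: a non-trivial Steiner t-design with t > 2 satisfies
v - t + 1 ≥ (k-t+2)(k-t+1). -/
theorem stmt6 {X B : Type*} [Fintype X] [Fintype B] (I : X → B → Prop)
    [∀ x b, Decidable (I x b)] {t v k : ℕ} (hD : IsDesign X B I t v k 1)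
    (ht : 2 < t) (hk : t < k) (hv : k < v) :
    v - t + 1 ≥ (k - t + 2) * (k - t + 1) := by
  classical
  obtain ⟨ht0, htk, hkv, -, hcard, hblk, hlam⟩ := hD
  set P : B → Finset X := fun b => Finset.univ.filter fun x => I x b with hPdef
  have hP : ∀ b, (P b).card = k := hblk
  -- unique block through each t-set
  have uniq : ∀ S : Finset X, S.card = t → ∃ b : B, S ⊆ P b ∧
      ∀ b' : B, S ⊆ P b' → b' = b := by
    intro S hS
    have h1 := hlam S hS
    rw [Finset.card_eq_one] at h1
    obtain ⟨b, hb⟩ := h1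
    rw [Finset.eq_singleton_iff_unique_mem] at hb
    obtain ⟨hbmem, hbun⟩ := hb
    simp only [Finset.mem_filter, Finset.mem_univ, true_and] at hbmem
    refine ⟨b, ?_, ?_⟩
    · intro x hx
      simp only [hPdef, Finset.mem_filter, Finset.mem_univ, true_and]
      exact hbmem x hx
    · intro b' h'
      apply hbun
      simp only [Finset.mem_filter, Finset.mem_univ, true_and]
      intro x hx
      have hx' := h' hx
      simp only [hPdef, Finset.mem_filter] at hx'
      exact hx'.2
  have same : ∀ (S : Finset X) (b b' : B), S.card = t → S ⊆ P b → S ⊆ P b' →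
      b = b' := by
    intro S b b' hS h1 h2
    obtain ⟨c, -, hu⟩ := uniq S hS
    rw [hu b h1, hu b' h2]
  -- pick a starting block b1
  have hvt : t ≤ (Finset.univ : Finset X).card := by
    rw [Finset.card_univ, hcard]; omega
  obtain ⟨S0, -, hS0⟩ := Finset.exists_subset_card_eq hvt
  obtain ⟨b1, hb1, -⟩ := uniq S0 hS0
  -- a (t-2)-subset T of b1
  have hT' : t - 2 ≤ (P b1).card := by rw [hP]; omega
  obtain ⟨T, hTsub, hT⟩ := Finset.exists_subset_card_eq hT'
  -- a point x in b1 \ T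
  have hx' : (P b1 \ T).Nonempty := by
    rw [← Finset.card_pos, Finset.card_sdiff_of_subset hTsub, hP, hT]; omega
  obtain ⟨x, hx⟩ := hx'
  rw [Finset.mem_sdiff] at hx
  -- a point y outside b1
  have hy' : ((Finset.univ : Finset X) \ P b1).Nonempty := by
    rw [← Finset.card_pos, Finset.card_sdiff_of_subset (Finset.subset_univ _),
      Finset.card_univ, hcard, hP]; omega
  obtain ⟨y, hy⟩ := hy'
  rw [Finset.mem_sdiff] at hy
  have hyT : y ∉ T := fun h => hy.2 (hTsub h)
  have hxy : x ≠ y := fun h => hy.2 (h ▸ hx.1)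
  -- block b0 through T ∪ {x, y}
  have hSxy : (insert x (insert y T)).card = t := by
    rw [Finset.card_insert_of_notMem, Finset.card_insert_of_notMem hyT, hT]
    · omega
    · simp [hxy, hx.2]
  obtain ⟨b0, hb0, -⟩ := uniq _ hSxy
  have hTb0 : T ⊆ P b0 :=
    (Finset.subset_insert y T).trans ((Finset.subset_insert x _).trans hb0)
  have hyb0 : y ∈ P b0 := hb0 (by simp)
  have hb0ne : b0 ≠ b1 := fun h => hy.2 (h ▸ hyb0)
  -- intersection of two distinct blocks has < t points
  have hint : (P b1 ∩ P b0).card < t := by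
    by_contra h
    push_neg at h
    obtain ⟨S', hS'sub, hS'⟩ := Finset.exists_subset_card_eq h
    exact hb0ne (same S' b0 b1 hS'
      (hS'sub.trans Finset.inter_subset_right)
      (hS'sub.trans Finset.inter_subset_left))
  -- pick p in b1 \ b0
  have hp' : (P b1 \ P b0).Nonempty := by
    rw [← Finset.card_pos]
    have h2 := Finset.card_sdiff_add_card_inter (P b1) (P b0)
    have h3 := hP b1
    omega
  obtain ⟨p, hp⟩ := hp'
  rw [Finset.mem_sdiff] at hp
  have hpT : p ∉ T := fun h => hp.2 (hTb0 h)
  set Tp : Finset X := insert p T with hTpdef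
  have hTp : Tp.card = t - 1 := by
    rw [hTpdef, Finset.card_insert_of_notMem hpT, hT]; omega
  set R : Finset B := Finset.univ.filter (fun b : B => Tp ⊆ P b) with hRdef
  have hRmem : ∀ b : B, b ∈ R ↔ Tp ⊆ P b := by intro b; simp [hRdef]
  -- counting: v - (t-1) = R.card * (k - (t-1))
  have hbu : R.biUnion (fun b => P b \ Tp) = Finset.univ \ Tp := by
    apply Finset.Subset.antisymm
    · intro z hz
      simp only [Finset.mem_biUnion] at hz
      obtain ⟨b, -, hz⟩ := hz
      rw [Finset.mem_sdiff] at hz ⊢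
      exact ⟨Finset.mem_univ z, hz.2⟩
    · intro z hz
      rw [Finset.mem_sdiff] at hz
      have hzcard : (insert z Tp).card = t := by
        rw [Finset.card_insert_of_notMem hz.2, hTp]; omega
      obtain ⟨c, hc, -⟩ := uniq _ hzcard
      rw [Finset.mem_biUnion]
      refine ⟨c, (hRmem c).2 ((Finset.subset_insert z Tp).trans hc), ?_⟩
      rw [Finset.mem_sdiff]
      exact ⟨hc (Finset.mem_insert_self z Tp), hz.2⟩
  have hdisj : ∀ b ∈ R, ∀ b' ∈ R, b ≠ b' →
      Disjoint (P b \ Tp) (P b' \ Tp) := by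
    intro b hb b' hb' hne
    rw [Finset.disjoint_left]
    intro z hz hz'
    rw [Finset.mem_sdiff] at hz hz'
    have hzcard : (insert z Tp).card = t := by
      rw [Finset.card_insert_of_notMem hz.2, hTp]; omega
    exact hne (same (insert z Tp) b b' hzcard
      (Finset.insert_subset hz.1 ((hRmem b).1 hb))
      (Finset.insert_subset hz'.1 ((hRmem b').1 hb')))
  have hmain : v - (t - 1) = R.card * (k - (t - 1)) := by
    have h1 : (R.biUnion (fun b => P b \ Tp)).card = v - (t - 1) := by
      rw [hbu, Finset.card_sdiff_of_subset (Finset.subset_univ _), Finset.card_univ,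
        hcard, hTp]
    rw [← h1, Finset.card_biUnion hdisj]
    apply Finset.sum_const_nat
    intro b hb
    rw [Finset.card_sdiff_of_subset ((hRmem b).1 hb), hP, hTp]
  -- injection from P b0 \ T into R
  have hf : ∀ z ∈ P b0 \ T,
      insert z Tp ⊆ P (if h : ∃ c : B, insert z Tp ⊆ P c then h.choose else b1)
      := by
    intro z hz
    rw [Finset.mem_sdiff] at hz
    have hzp : z ≠ p := fun h => hp.2 (h ▸ hz.1)
    have hzTp : z ∉ Tp := by
      rw [hTpdef, Finset.mem_insert]
      push_neg
      exact ⟨hzp, hz.2⟩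
    have hzcard : (insert z Tp).card = t := by
      rw [Finset.card_insert_of_notMem hzTp, hTp]; omega
    obtain ⟨c, hc, -⟩ := uniq _ hzcard
    have hex : ∃ c : B, insert z Tp ⊆ P c := ⟨c, hc⟩
    rw [dif_pos hex]
    exact hex.choose_spec
  have hinj : (P b0 \ T).card ≤ R.card := by
    apply Finset.card_le_card_of_injOn
      (fun z => if h : ∃ c : B, insert z Tp ⊆ P c then h.choose else b1)
    · intro z hz
      exact (hRmem _).2 ((Finset.subset_insert z Tp).trans (hf z hz))
    · intro z1 hz1 z2 hz2 heq
      by_contra hne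
      have h1 := hf z1 hz1
      have h2 := hf z2 hz2
      have heq' : (if h : ∃ c : B, insert z1 Tp ⊆ P c then h.choose else b1)
          = (if h : ∃ c : B, insert z2 Tp ⊆ P c then h.choose else b1) := heq
      rw [heq'] at h1
      set c := if h : ∃ c : B, insert z2 Tp ⊆ P c then h.choose else b1
      rw [Finset.mem_coe, Finset.mem_sdiff] at hz1 hz2
      have hsub : insert z1 (insert z2 T) ⊆ P c := by
        apply Finset.insert_subset (h1 (Finset.mem_insert_self _ _))
        apply Finset.insert_subset (h2 (Finset.mem_insert_self _ _))
        intro w hw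
        exact h1 (Finset.mem_insert_of_mem (Finset.mem_insert_of_mem hw))
      have hsub' : insert z1 (insert z2 T) ⊆ P b0 := by
        apply Finset.insert_subset hz1.1
        exact Finset.insert_subset hz2.1 hTb0
      have hcard' : (insert z1 (insert z2 T)).card = t := by
        rw [Finset.card_insert_of_notMem, Finset.card_insert_of_notMem hz2.2,
          hT]
        · omega
        · simp [hne, hz1.2]
      have : c = b0 := same _ c b0 hcard' hsub hsub'
      exact hp.2 (this ▸ h1 (Finset.mem_insert_of_mem (Finset.mem_insert_self p T)))
  have hcardb0 : (P b0 \ T).card = k - (t - 2) := by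
    rw [Finset.card_sdiff_of_subset hTb0, hP, hT]
  -- finish
  have h1 : k - (t - 1) = k - t + 1 := by omega
  have h2 : v - (t - 1) = v - t + 1 := by omega
  rw [h1, h2] at hmain
  have h3 : k - t + 2 ≤ R.card := by omega
  have hmul : (k - t + 2) * (k - t + 1) ≤ R.card * (k - t + 1) :=
    Nat.mul_le_mul_right _ h3
  rw [ge_iff_le, hmain]
  exact hmul
end

section
/- For a non-trivial Steiner t-design with t > 2 and parameters t-(v,k,1), if v - t + 1 = (k-t+2)(k-t+1), then (t,k,v) is one of (3,4,8), (3,6,22), (3,12,112), (4,7,23), (5,8,24). -/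
open Finset

lemma count_between {α : Type*} [DecidableEq α] {S P : Finset α} (hSP : S ⊆ P) {t : ℕ}
    (hst : S.card ≤ t) :
    ((P.powersetCard t).filter (fun T => S ⊆ T)).card = (P.card - S.card).choose (t - S.card) := by
  have h1 : (P.card - S.card).choose (t - S.card) = ((P \ S).powersetCard (t - S.card)).card := by
    rw [Finset.card_powersetCard, Finset.card_sdiff_of_subset hSP]
  rw [h1]
  apply Finset.card_bij' (fun T _ => T \ S) (fun U _ => U ∪ S)
  · intro T hT
    simp only [Finset.mem_filter, Finset.mem_powersetCard] at hT ⊢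
    exact ⟨Finset.sdiff_subset_sdiff hT.1.1 le_rfl, by
      rw [Finset.card_sdiff_of_subset hT.2, hT.1.2]⟩
  · intro U hU
    simp only [Finset.mem_filter, Finset.mem_powersetCard] at hU ⊢
    have hUS : Disjoint U S := Finset.disjoint_of_subset_left hU.1 (Finset.sdiff_disjoint)
    refine ⟨⟨Finset.union_subset (hU.1.trans (Finset.sdiff_subset)) hSP, ?_⟩,
      Finset.subset_union_right⟩
    rw [Finset.card_union_of_disjoint hUS, hU.2]
    omega
  · intro T hT
    simp only [Finset.mem_filter, Finset.mem_powersetCard] at hT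
    exact Finset.sdiff_union_of_subset hT.2
  · intro U hU
    simp only [Finset.mem_filter, Finset.mem_powersetCard] at hU
    have hUS : Disjoint U S := Finset.disjoint_of_subset_left hU.1 (Finset.sdiff_disjoint)
    rw [Finset.union_sdiff_right, Finset.sdiff_eq_self_of_disjoint hUS]

lemma design_dvd {X B : Type*} [Fintype X] [Fintype B] [DecidableEq X] (I : X → B → Prop)
    [∀ x b, Decidable (I x b)] {t v k : ℕ} (hD : IsDesign X B I t v k 1) (s : ℕ) (hst : s ≤ t) :
    (k - s).choose (t - s) ∣ (v - s).choose (t - s) := by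
  obtain ⟨ht0, htk, hkv, -, hcard, hblk, hpts⟩ := hD
  obtain ⟨S, -, hS⟩ : ∃ S ⊆ (univ : Finset X), S.card = s :=
    Finset.exists_subset_card_eq (by rw [Finset.card_univ, hcard]; omega)
  set 𝒯 := ((univ : Finset X).powersetCard t).filter (fun T => S ⊆ T) with h𝒯
  have key : ∀ b : B, (𝒯.filter (fun T => ∀ x ∈ T, I x b)).card
      = if (∀ x ∈ S, I x b) then (k - s).choose (t - s) else 0 := by
    intro b
    by_cases hb : ∀ x ∈ S, I x b
    · rw [if_pos hb]
      have hSb : S ⊆ univ.filter (fun x => I x b) := by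
        intro x hx; simp only [Finset.mem_filter, Finset.mem_univ, true_and]; exact hb x hx
      have heq2 : 𝒯.filter (fun T => ∀ x ∈ T, I x b)
          = ((univ.filter (fun x => I x b)).powersetCard t).filter (fun T => S ⊆ T) := by
        ext T
        simp only [h𝒯, Finset.mem_filter, Finset.mem_powersetCard, Finset.subset_univ, true_and]
        constructor
        · rintro ⟨⟨hc, hST⟩, hTb⟩
          refine ⟨⟨fun x hx => ?_, hc⟩, hST⟩
          simp only [Finset.mem_filter, Finset.mem_univ, true_and]
          exact hTb x hx
        · rintro ⟨⟨hTb, hc⟩, hST⟩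
          exact ⟨⟨hc, hST⟩, fun x hx => (Finset.mem_filter.mp (hTb hx)).2⟩
      rw [heq2, count_between hSb (hS ▸ hst), hblk b, hS]
    · rw [if_neg hb]
      rw [Finset.card_eq_zero, Finset.filter_eq_empty_iff]
      intro T hT
      simp only [h𝒯, Finset.mem_filter, Finset.mem_powersetCard] at hT
      exact fun hall => hb (fun x hx => hall x (hT.2 hx))
  have main : (v - s).choose (t - s) = (k - s).choose (t - s)
      * (univ.filter fun b : B => ∀ x ∈ S, I x b).card := by
    calc (v - s).choose (t - s)
        = 𝒯.card := by
          rw [h𝒯, count_between (Finset.subset_univ S) (hS ▸ hst), Finset.card_univ, hcard, hS]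
      _ = ∑ T ∈ 𝒯, (univ.filter fun b : B => ∀ x ∈ T, I x b).card := by
          rw [Finset.card_eq_sum_ones]
          refine Finset.sum_congr rfl fun T hT => ?_
          have h1 := hpts T (Finset.mem_powersetCard.mp (Finset.mem_filter.mp hT).1).2
          convert h1.symm using 2
          congr!
      _ = ∑ T ∈ 𝒯, ∑ b : B, if (∀ x ∈ T, I x b) then 1 else 0 :=
          Finset.sum_congr rfl fun T _ => Finset.card_filter _ _
      _ = ∑ b : B, ∑ T ∈ 𝒯, if (∀ x ∈ T, I x b) then 1 else 0 := Finset.sum_comm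
      _ = ∑ b : B, (𝒯.filter (fun T => ∀ x ∈ T, I x b)).card :=
          Finset.sum_congr rfl fun b _ => (Finset.card_filter _ _).symm
      _ = ∑ b : B, if (∀ x ∈ S, I x b) then (k - s).choose (t - s) else 0 :=
          Finset.sum_congr rfl fun b _ => key b
      _ = (k - s).choose (t - s) * (univ.filter fun b : B => ∀ x ∈ S, I x b).card := by
          rw [Finset.sum_ite, Finset.sum_const_zero, add_zero, Finset.sum_const, smul_eq_mul,
            mul_comm]
  exact Dvd.intro _ main.symm

lemma choose_dvd_to_descFactorial {c d m : ℕ} (h : c.choose m ∣ d.choose m) :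
    c.descFactorial m ∣ d.descFactorial m := by
  rw [Nat.descFactorial_eq_factorial_mul_choose, Nat.descFactorial_eq_factorial_mul_choose]
  exact Nat.mul_dvd_mul_left _ h

/-- Equality case of Cameron's bound: for a non-trivial Steiner t-design with t > 2,
if v - t + 1 = (k-t+2)(k-t+1) then (t,k,v) is one of
(3,4,8), (3,6,22), (3,12,112), (4,7,23), (5,8,24). -/
theorem stmt7 {X B : Type*} [Fintype X] [Fintype B] (I : X → B → Prop)
    [∀ x b, Decidable (I x b)] {t v k : ℕ} (hD : IsDesign X B I t v k 1)
    (ht : 2 < t) (hk : t < k) (hv : k < v)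
    (heq : v - t + 1 = (k - t + 2) * (k - t + 1)) :
    (t, k, v) = (3, 4, 8) ∨ (t, k, v) = (3, 6, 22) ∨ (t, k, v) = (3, 12, 112) ∨
      (t, k, v) = (4, 7, 23) ∨ (t, k, v) = (5, 8, 24) := by
  classical
  have hdvd : ∀ s ≤ t, (k - s).choose (t - s) ∣ (v - s).choose (t - s) :=
    fun s hs => design_dvd I hD s hs
  obtain ⟨a, ha1, hka⟩ : ∃ a, 1 ≤ a ∧ k = t + a := ⟨k - t, by omega, by omega⟩
  have hva : v = t + (a * a + 3 * a + 1) := by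
    have h2 : (k - t + 2) * (k - t + 1) = a * a + 3 * a + 2 := by
      rw [show k - t = a from by omega]; ring
    omega
  -- the condition from s = t - 3
  have h3 := hdvd (t - 3) (by omega)
  rw [show k - (t - 3) = a + 3 from by omega, show t - (t - 3) = 3 from by omega,
    show v - (t - 3) = a * a + 3 * a + 4 from by omega] at h3
  have hP := choose_dvd_to_descFactorial h3
  rw [show (3 : ℕ) = 2 + 1 from rfl, Nat.descFactorial_succ, Nat.descFactorial_succ,
    Nat.descFactorial_one, Nat.descFactorial_succ, Nat.descFactorial_succ,
    Nat.descFactorial_one, show a + 3 - 2 = a + 1 from by omega,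
    show a + 3 - 1 = a + 2 from by omega,
    show a * a + 3 * a + 4 - 2 = a * a + 3 * a + 2 from by omega,
    show a * a + 3 * a + 4 - 1 = a * a + 3 * a + 3 from by omega] at hP
  -- hP : (a+1) * ((a+2) * (a+3)) ∣ (a*a+3*a+2) * ((a*a+3*a+3) * (a*a+3*a+4))
  have hA : (a + 3) ∣ (a * a + 3 * a + 2) * ((a * a + 3 * a + 3) * (a * a + 3 * a + 4)) :=
    dvd_trans ⟨(a + 1) * (a + 2), by ring⟩ hP
  have h24 : (a + 3) ∣ 24 := by
    have key : (a * a + 3 * a + 2) * ((a * a + 3 * a + 3) * (a * a + 3 * a + 4))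
        = (a + 3) * (a * ((a * a + 3 * a) * (a * a + 3 * a) + 9 * (a * a + 3 * a) + 26)) + 24 := by
      ring
    rw [key] at hA
    exact (Nat.dvd_add_right ⟨_, rfl⟩).mp hA
  have ha21 : a ≤ 21 := by
    have := Nat.le_of_dvd (by norm_num) h24; omega
  interval_cases a
  -- a = 1
  · have ht4 : t < 4 := by
      by_contra h
      push_neg at h
      have h4 := hdvd (t - 4) (by omega)
      rw [show k - (t - 4) = 5 from by omega, show t - (t - 4) = 4 from by omega,
        show v - (t - 4) = 9 from by omega] at h4
      exact absurd (choose_dvd_to_descFactorial h4) (by decide)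
    simp only [Prod.mk.injEq]; omega
  · exact absurd hP (by norm_num)
  -- a = 3
  · have ht6 : t < 6 := by
      by_contra h
      push_neg at h
      have h6 := hdvd (t - 6) (by omega)
      rw [show k - (t - 6) = 9 from by omega, show t - (t - 6) = 6 from by omega,
        show v - (t - 6) = 25 from by omega] at h6
      exact absurd (choose_dvd_to_descFactorial h6) (by decide)
    simp only [Prod.mk.injEq]; omega
  · exact absurd hP (by norm_num)
  · exact absurd hP (by norm_num)
  · exact absurd hP (by norm_num)
  · exact absurd hP (by norm_num)
  · exact absurd hP (by norm_num)
  -- a = 9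
  · have ht4 : t < 4 := by
      by_contra h
      push_neg at h
      have h4 := hdvd (t - 4) (by omega)
      rw [show k - (t - 4) = 13 from by omega, show t - (t - 4) = 4 from by omega,
        show v - (t - 4) = 113 from by omega] at h4
      exact absurd (choose_dvd_to_descFactorial h4) (by decide)
    simp only [Prod.mk.injEq]; omega
  · exact absurd hP (by norm_num)
  · exact absurd hP (by norm_num)
  · exact absurd hP (by norm_num)
  · exact absurd hP (by norm_num)
  · exact absurd hP (by norm_num)
  · exact absurd hP (by norm_num)
  · exact absurd hP (by norm_num)
  · exact absurd hP (by norm_num)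
  · exact absurd hP (by norm_num)
  · exact absurd hP (by norm_num)
  · exact absurd hP (by norm_num)
  · exact absurd hP (by norm_num)
end

section
/- If D is a non-trivial 2-(v,k,λ) design, then the number of blocks b satisfies b ≥ v (Fisher's Inequality). -/
open Finset

/-- Fisher's inequality: a non-trivial 2-(v,k,λ) design has b ≥ v. -/
theorem stmt8 {X B : Type*} [Fintype X] [Fintype B] (I : X → B → Prop)
    [∀ x b, Decidable (I x b)] {v k l : ℕ} (hD : IsDesign X B I 2 v k l)
    (hk : 2 < k) (hv : k < v) :
    Fintype.card B ≥ v := by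
  classical
  obtain ⟨-, htk, hkv, hl, hcard, hblocks, hpairs⟩ := hD
  -- c x y : number of blocks containing both x and y
  set c : X → X → ℕ := fun x y => (univ.filter fun b : B => I x b ∧ I y b).card with hc
  have hcpair : ∀ x y : X, x ≠ y → c x y = l := by
    intro x y hxy
    have h2 : ({x, y} : Finset X).card = 2 := card_pair hxy
    have h3 := hpairs {x, y} h2
    rw [← h3]
    simp only [hc]
    congr 1
    ext b
    simp [forall_and]
  -- replication number bound: l < c x x
  have hrep : ∀ x : X, l < c x x := by
    intro x
    have hcxx : c x x = (univ.filter fun b : B => I x b).card := by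
      simp [hc]
    -- double counting
    have hdc : (univ.filter fun b : B => I x b).card * (k - 1) = (v - 1) * l := by
      have lhs : ∑ y ∈ univ.erase x, c y x
          = ∑ b ∈ univ.filter (fun b : B => I x b), (k - 1) := by
        have : ∀ y, c y x = ∑ b : B, if I y b ∧ I x b then 1 else 0 := by
          intro y; simp only [hc]; rw [Finset.card_filter]
        simp only [this]
        rw [Finset.sum_comm]
        rw [Finset.sum_filter]
        apply Finset.sum_congr rfl
        intro b _
        by_cases hxb : I x b
        · simp only [hxb, if_true, and_true]
          have : ∑ y ∈ univ.erase x, (if I y b then 1 else 0)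
              = ((univ.erase x).filter fun y => I y b).card := by
            rw [Finset.card_filter]
          rw [this]
          have : (univ.erase x).filter (fun y => I y b)
              = (univ.filter fun y => I y b).erase x := by
            ext z; simp [and_comm]
          rw [this, Finset.card_erase_of_mem (by simp [hxb]), hblocks b]
        · simp [hxb]
      have rhs : ∑ y ∈ univ.erase x, c y x = (v - 1) * l := by
        rw [Finset.sum_congr rfl (fun y hy => hcpair y x (Finset.ne_of_mem_erase hy))]
        rw [Finset.sum_const, Finset.card_erase_of_mem (mem_univ x), Finset.card_univ,
          hcard, smul_eq_mul]
      rw [← rhs, lhs, Finset.sum_const, smul_eq_mul]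
    rw [hcxx]
    have hk1 : 0 < k - 1 := by omega
    have : l * (k - 1) < (univ.filter fun b : B => I x b).card * (k - 1) := by
      rw [hdc]
      calc l * (k - 1) < l * (v - 1) :=
            mul_lt_mul_of_pos_left (show k - 1 < v - 1 by omega) hl
        _ = (v - 1) * l := Nat.mul_comm _ _
    exact Nat.lt_of_mul_lt_mul_right this
  -- the incidence linear map
  set e : X → B → ℚ := fun x b => if I x b then 1 else 0 with he
  have hee : ∀ x y (b : B), e x b * e y b = if I x b ∧ I y b then 1 else 0 := by
    intro x y b; simp only [he]; split_ifs with h1 h2 h3 <;> simp_all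
  let f : (X → ℚ) →ₗ[ℚ] (B → ℚ) :=
  { toFun := fun u b => ∑ x, e x b * u x
    map_add' := by
      intro u w; funext b
      simp [mul_add, Finset.sum_add_distrib]
    map_smul' := by
      intro a u; funext b
      simp [Finset.mul_sum, mul_left_comm] }
  have hinj : Function.Injective f := by
    rw [← LinearMap.ker_eq_bot, LinearMap.ker_eq_bot']
    intro u hu
    have hub : ∀ b : B, ∑ x, e x b * u x = 0 := fun b => congrFun hu b
    -- the quadratic form
    have hQ0 : ∑ b : B, (∑ x, e x b * u x) ^ 2 = 0 := by
      apply Finset.sum_eq_zero; intro b _; rw [hub b]; ring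
    have hQ : ∑ b : B, (∑ x, e x b * u x) ^ 2
        = ∑ x, ∑ y, (c x y : ℚ) * (u x * u y) := by
      have : ∀ b : B, (∑ x, e x b * u x) ^ 2
          = ∑ x, ∑ y, (if I x b ∧ I y b then 1 else 0) * (u x * u y) := by
        intro b
        rw [sq, Finset.sum_mul_sum]
        apply Finset.sum_congr rfl; intro x _
        apply Finset.sum_congr rfl; intro y _
        rw [← hee x y b]; ring
      simp only [this]
      rw [Finset.sum_comm]
      apply Finset.sum_congr rfl; intro x _
      rw [Finset.sum_comm]
      apply Finset.sum_congr rfl; intro y _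
      rw [← Finset.sum_mul]
      congr 1
      simp only [hc]
      rw [Finset.card_filter]
      push_cast
      rfl
    -- split into diagonal and off-diagonal
    have hsplit : ∑ x, ∑ y, (c x y : ℚ) * (u x * u y)
        = ∑ x, ((c x x : ℚ) - l) * u x ^ 2 + l * (∑ x, u x) ^ 2 := by
      have h1 : ∀ x : X, ∑ y, (c x y : ℚ) * (u x * u y)
          = ((c x x : ℚ) - l) * u x ^ 2 + l * ∑ y, u x * u y := by
        intro x
        rw [← Finset.add_sum_erase _ _ (mem_univ x),
            ← Finset.add_sum_erase _ (fun y => u x * u y) (mem_univ x)]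
        rw [Finset.sum_congr rfl
          (fun y hy => by rw [hcpair x y (Finset.ne_of_mem_erase hy).symm])]
        rw [← Finset.mul_sum, mul_add]
        ring
      simp only [h1]
      rw [Finset.sum_add_distrib, ← Finset.mul_sum]
      congr 1
      rw [sq, Finset.sum_mul_sum]
    have key : ∑ x, ((c x x : ℚ) - l) * u x ^ 2 + l * (∑ x, u x) ^ 2 = 0 := by
      rw [← hsplit, ← hQ, hQ0]
    have hnonneg : ∀ x : X, x ∈ (univ : Finset X) → 0 ≤ ((c x x : ℚ) - l) * u x ^ 2 := by
      intro x _
      apply mul_nonneg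
      · have := hrep x
        have : (l : ℚ) < c x x := by exact_mod_cast this
        linarith
      · positivity
    have hsum0 : ∑ x, ((c x x : ℚ) - l) * u x ^ 2 = 0 := by
      have h2 : (0:ℚ) ≤ l * (∑ x, u x) ^ 2 := by positivity
      have h3 : (0:ℚ) ≤ ∑ x, ((c x x : ℚ) - l) * u x ^ 2 :=
        Finset.sum_nonneg hnonneg
      linarith
    funext x
    have := (Finset.sum_eq_zero_iff_of_nonneg hnonneg).mp hsum0 x (mem_univ x)
    have hpos : (0:ℚ) < (c x x : ℚ) - l := by
      have := hrep x
      have : (l : ℚ) < c x x := by exact_mod_cast this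
      linarith
    have : u x ^ 2 = 0 := by
      rcases mul_eq_zero.mp this with h | h
      · linarith
      · exact h
    have := pow_eq_zero_iff (n := 2) (by norm_num) |>.mp this
    simpa using this
  have h1 : Module.finrank ℚ (X → ℚ) ≤ Module.finrank ℚ (B → ℚ) :=
    LinearMap.finrank_le_finrank_of_injective hinj
  rw [Module.finrank_pi, Module.finrank_pi, hcard] at h1
  exact h1
end

section
/- Let D be a t-(v,k,λ) design with t = 2s even and v ≥ k + s. Then the number of blocks b satisfies b ≥ C(v, s) (Ray-Chaudhuri–Wilson inequality). -/
open Finset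

namespace RWaux

lemma card_filter_superset {α : Type*} [DecidableEq α] {G F : Finset α} (h : F ⊆ G) {n : ℕ}
    (hn : F.card ≤ n) :
    ((G.powersetCard n).filter (fun T => F ⊆ T)).card
      = (G.card - F.card).choose (n - F.card) := by
  have key : ((G.powersetCard n).filter (fun T => F ⊆ T)).card
      = ((G \ F).powersetCard (n - F.card)).card := by
    apply Finset.card_bij (fun T _ => T \ F)
    · intro T hT
      simp only [mem_filter, mem_powersetCard] at hT ⊢
      refine ⟨sdiff_subset_sdiff hT.1.1 le_rfl, ?_⟩
      rw [card_sdiff_of_subset hT.2, hT.1.2]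
    · intro T hT T' hT' hE
      simp only [mem_filter, mem_powersetCard] at hT hT'
      have : T \ F ∪ F = T' \ F ∪ F := by rw [hE]
      rwa [sdiff_union_of_subset hT.2, sdiff_union_of_subset hT'.2] at this
    · intro U hU
      simp only [mem_powersetCard] at hU
      have hUF : Disjoint U F := Finset.sdiff_disjoint.mono_left hU.1
      refine ⟨U ∪ F, ?_, ?_⟩
      · simp only [mem_filter, mem_powersetCard]
        refine ⟨⟨union_subset (hU.1.trans sdiff_subset) h, ?_⟩, subset_union_right⟩
        rw [card_union_of_disjoint hUF, hU.2, Nat.sub_add_cancel hn]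
      · rw [union_sdiff_right, sdiff_eq_self_of_disjoint hUF]
  rw [key, card_powersetCard, card_sdiff_of_subset h]


variable {X B : Type*} [Fintype X] [Fintype B] [DecidableEq X]
  {I : X → B → Prop} [∀ x b, Decidable (I x b)]

/-- blocks incident with everything in `F` and nothing in `A`. -/
def blk (I : X → B → Prop) [∀ x b, Decidable (I x b)] (F A : Finset X) : Finset B :=
  univ.filter fun b => (∀ x ∈ F, I x b) ∧ (∀ x ∈ A, ¬ I x b)

variable {s v k l : ℕ} (hD : IsDesign X B I (2 * s) v k l)

include hD

/-- basic double count: λ_j * C(k-j, 2s-j) = l * C(v-j, 2s-j). -/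
lemma count_base {F : Finset X} (hj : F.card ≤ 2 * s) :
    (blk I F ∅).card * (k - F.card).choose (2 * s - F.card)
      = l * (v - F.card).choose (2 * s - F.card) := by
  obtain ⟨-, htk, hkv, hl, hX, hk, hl2⟩ := hD
  set 𝒯 : Finset (Finset X) :=
    ((univ : Finset X).powersetCard (2 * s)).filter (fun T => F ⊆ T) with h𝒯
  have key : ∑ T ∈ 𝒯, (univ.filter (fun b : B => ∀ x ∈ T, I x b)).card
      = ∑ b : B, (𝒯.filter (fun T => ∀ x ∈ T, I x b)).card := by
    simp_rw [card_filter]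
    rw [Finset.sum_comm]
  have hFu : F ⊆ univ := subset_univ F
  have lhs : ∑ T ∈ 𝒯, (univ.filter (fun b : B => ∀ x ∈ T, I x b)).card
      = (v - F.card).choose (2 * s - F.card) * l := by
    rw [Finset.sum_congr rfl (fun T hT => ?_), Finset.sum_const, smul_eq_mul,
      h𝒯, card_filter_superset hFu hj, card_univ, hX]
    rw [h𝒯, mem_filter, mem_powersetCard] at hT
    have := hl2 T hT.1.2
    rw [← this]
    congr 1
    exact (filter_congr_decidable _ _ _).symm
  have rhs : ∀ b : B, (𝒯.filter (fun T => ∀ x ∈ T, I x b)).card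
      = if (∀ x ∈ F, I x b) then (k - F.card).choose (2 * s - F.card) else 0 := by
    intro b
    by_cases hb : ∀ x ∈ F, I x b
    · rw [if_pos hb]
      have : 𝒯.filter (fun T => ∀ x ∈ T, I x b)
          = ((univ.filter (fun x => I x b)).powersetCard (2 * s)).filter (fun T => F ⊆ T) := by
        ext T
        constructor
        · intro hT
          obtain ⟨hT𝒯, hTb⟩ := mem_filter.1 hT
          rw [h𝒯, mem_filter, mem_powersetCard] at hT𝒯
          exact mem_filter.2 ⟨mem_powersetCard.2
            ⟨fun x hx => mem_filter.2 ⟨mem_univ x, hTb x hx⟩, hT𝒯.1.2⟩, hT𝒯.2⟩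
        · intro hT
          rw [mem_filter, mem_powersetCard] at hT
          refine mem_filter.2 ⟨?_, fun x hx => (mem_filter.1 (hT.1.1 hx)).2⟩
          rw [h𝒯, mem_filter, mem_powersetCard]
          exact ⟨⟨subset_univ T, hT.1.2⟩, hT.2⟩
      rw [this, card_filter_superset (fun x hx => mem_filter.2 ⟨mem_univ x, hb x hx⟩) hj, hk b]
    · rw [if_neg hb, Finset.card_eq_zero, Finset.filter_eq_empty_iff]
      intro T hT
      rw [h𝒯, mem_filter] at hT
      exact fun hTb => hb (fun x hx => hTb x (hT.2 hx))
  rw [lhs] at key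
  rw [Finset.sum_congr rfl (fun b _ => rhs b), Finset.sum_ite, Finset.sum_const,
    Finset.sum_const, smul_eq_mul, smul_eq_mul, mul_zero, add_zero] at key
  have : (Finset.filter (fun b : B => ∀ x ∈ F, I x b) univ) = blk I F ∅ := by
    simp [blk]
  rw [this] at key
  rw [key.symm, mul_comm]

omit hD in
lemma blk_split (F A : Finset X) (x : X) :
    (blk I F A).card = (blk I (insert x F) A).card + (blk I F (insert x A)).card := by
  have hdis : Disjoint (blk I (insert x F) A) (blk I F (insert x A)) := by
    rw [Finset.disjoint_left]
    intro b h1 h2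
    simp only [blk, mem_filter, forall_mem_insert] at h1 h2
    exact h2.2.2.1 h1.2.1.1
  classical
  rw [← card_union_of_disjoint hdis]
  congr 1
  ext b
  simp only [blk, mem_union, mem_filter, mem_univ, true_and, forall_mem_insert]
  by_cases hxb : I x b <;> tauto

lemma blk_const : ∀ (a : ℕ) (F A F' A' : Finset X), A.card = a → A'.card = a →
    F.card = F'.card → F.card + a ≤ 2 * s → Disjoint F A → Disjoint F' A' →
    (blk I F A).card = (blk I F' A').card := by
  intro a
  induction a with
  | zero =>
    intro F A F' A' hA hA' hFF h2s _ _
    rw [Finset.card_eq_zero.1 hA, Finset.card_eq_zero.1 hA']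
    have hj : F.card ≤ 2 * s := by omega
    have hj' : F'.card ≤ 2 * s := by omega
    have c1 := count_base hD hj
    have c2 := count_base hD hj'
    rw [← hFF] at c2
    have hpos : 0 < (k - F.card).choose (2 * s - F.card) :=
      Nat.choose_pos (Nat.sub_le_sub_right hD.2.1 _)
    exact Nat.eq_of_mul_eq_mul_right hpos (c1.trans c2.symm)
  | succ n ih =>
    intro F A F' A' hA hA' hFF h2s hdisj hdisj'
    obtain ⟨x, hx⟩ : A.Nonempty := Finset.card_pos.1 (by omega)
    obtain ⟨x', hx'⟩ : A'.Nonempty := Finset.card_pos.1 (by omega)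
    have hAi : A = insert x (A.erase x) := (Finset.insert_erase hx).symm
    have hAi' : A' = insert x' (A'.erase x') := (Finset.insert_erase hx').symm
    have e1 := blk_split (I := I) F (A.erase x) x
    have e1' := blk_split (I := I) F' (A'.erase x') x'
    have hxF : x ∉ F := fun h => (Finset.disjoint_left.1 hdisj h) hx
    have hxF' : x' ∉ F' := fun h => (Finset.disjoint_left.1 hdisj' h) hx'
    have hcard : (A.erase x).card = n := by rw [Finset.card_erase_of_mem hx, hA]; omega
    have hcard' : (A'.erase x').card = n := by rw [Finset.card_erase_of_mem hx', hA']; omega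
    have d1 : Disjoint F (A.erase x) := hdisj.mono_right (Finset.erase_subset _ _)
    have d1' : Disjoint F' (A'.erase x') := hdisj'.mono_right (Finset.erase_subset _ _)
    have d2 : Disjoint (insert x F) (A.erase x) := by
      rw [Finset.disjoint_insert_left]
      exact ⟨Finset.notMem_erase _ _, d1⟩
    have d2' : Disjoint (insert x' F') (A'.erase x') := by
      rw [Finset.disjoint_insert_left]
      exact ⟨Finset.notMem_erase _ _, d1'⟩
    have i1 := ih F (A.erase x) F' (A'.erase x') hcard hcard' hFF (by omega) d1 d1'
    have i2 := ih (insert x F) (A.erase x) (insert x' F') (A'.erase x') hcard hcard'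
      (by rw [Finset.card_insert_of_notMem hxF, Finset.card_insert_of_notMem hxF', hFF])
      (by rw [Finset.card_insert_of_notMem hxF]; omega) d2 d2'
    rw [hAi, hAi']
    omega

omit hD in
lemma blk_partition (U A₀ : Finset X) :
    (blk I U ∅).card = ∑ A' ∈ A₀.powerset, (blk I (U ∪ A') (A₀ \ A')).card := by
  classical
  apply Finset.card_eq_sum_card_fiberwise (f := fun b => A₀.filter (fun x => I x b))
    (t := A₀.powerset) (fun b _ => Finset.mem_powerset.2 (Finset.filter_subset _ _)) |>.trans
  apply Finset.sum_congr rfl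
  intro A' hA'
  rw [Finset.mem_powerset] at hA'
  congr 1
  ext b
  simp only [blk, mem_filter, mem_univ, true_and, notMem_empty, false_implies, implies_true,
    and_true, true_and, forall_mem_union, mem_sdiff]
  constructor
  · rintro ⟨hU, hfil⟩
    refine ⟨⟨hU, fun x hxA' => ?_⟩, fun x hx => ?_⟩
    · exact (Finset.mem_filter.1 (hfil ▸ hxA' : x ∈ A₀.filter (fun y => I y b))).2
    · intro hxb
      exact hx.2 (hfil ▸ Finset.mem_filter.2 ⟨hx.1, hxb⟩)
  · rintro ⟨⟨hU, hA'b⟩, hAvoid⟩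
    refine ⟨hU, ?_⟩
    ext y
    simp only [Finset.mem_filter]
    constructor
    · rintro ⟨hyA₀, hyb⟩
      by_contra hyA'
      exact hAvoid y ⟨hyA₀, hyA'⟩ hyb
    · intro hyA'
      exact ⟨hA' hyA', hA'b y hyA'⟩

lemma lambda_expand (a : ℕ → ℕ)
    (ha : ∀ i, i ≤ s → ∀ F A : Finset X, Disjoint F A → F.card = 2 * s - i → A.card = i →
      (blk I F A).card = a i)
    {U : Finset X} {m : ℕ} (hm : m ≤ s) (hU : U.card = 2 * s - m) :
    (blk I U ∅).card = ∑ i ∈ Finset.range (s + 1), m.choose i * a i := by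
  classical
  have h2sv : 2 * s ≤ v := le_trans hD.2.1 hD.2.2.1
  have hXv : Fintype.card X = v := hD.2.2.2.2.1
  have hUv : U.card ≤ v := by rw [← hXv, ← card_univ]; exact card_le_card (subset_univ U)
  obtain ⟨A₀, hA₀sub, hA₀card⟩ := Finset.exists_subset_card_eq
    (show m ≤ (univ \ U).card by
      rw [card_sdiff_of_subset (subset_univ U), card_univ, hXv]; omega)
  have hdisUA : Disjoint U A₀ := by
    refine Finset.disjoint_left.2 fun x hxU hxA => ?_
    exact (Finset.mem_sdiff.1 (hA₀sub hxA)).2 hxU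
  rw [blk_partition U A₀]
  have step : ∀ A' ∈ A₀.powerset, (blk I (U ∪ A') (A₀ \ A')).card = a (m - A'.card) := by
    intro A' hA'
    rw [Finset.mem_powerset] at hA'
    have hA'card : A'.card ≤ m := hA₀card ▸ card_le_card hA'
    refine ha (m - A'.card) (by omega) _ _ ?_ ?_ ?_
    · rw [Finset.disjoint_union_left]
      exact ⟨hdisUA.mono_right (Finset.sdiff_subset), Finset.disjoint_sdiff⟩
    · rw [card_union_of_disjoint (hdisUA.mono_right hA'), hU]
      omega
    · rw [card_sdiff_of_subset hA', hA₀card]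
  rw [Finset.sum_congr rfl step, Finset.sum_powerset_apply_card (f := fun j => a (m - j)), hA₀card]
  have refl : ∑ j ∈ Finset.range (m + 1), m.choose j • a (m - j)
      = ∑ j ∈ Finset.range (m + 1), m.choose j * a j := by
    rw [← Finset.sum_range_reflect]
    refine Finset.sum_congr rfl fun j hj => ?_
    rw [Finset.mem_range] at hj
    have h1 : m + 1 - 1 - j = m - j := by omega
    have h2 : m - (m - j) = j := by omega
    rw [h1, h2, smul_eq_mul, Nat.choose_symm (by omega)]
  rw [refl]
  apply Finset.sum_subset (Finset.range_subset_range.2 (by omega))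
  intro i _ hi
  rw [Finset.mem_range, not_lt] at hi
  rw [Nat.choose_eq_zero_of_lt (by omega), zero_mul]

lemma a_pos (hv : v ≥ k + s) (a : ℕ → ℕ)
    (ha : ∀ i, i ≤ s → ∀ F A : Finset X, Disjoint F A → F.card = 2 * s - i → A.card = i →
      (blk I F A).card = a i) :
    0 < a s := by
  classical
  obtain ⟨-, htk, hkv, hl, hX, hk, -⟩ := id hD
  obtain ⟨F, -, hFcard⟩ := Finset.exists_subset_card_eq
    (show s ≤ (univ : Finset X).card by rw [card_univ, hX]; omega)
  have hFs : F.card ≤ 2 * s := by omega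
  have hcb := count_base hD (F := F) hFs
  have hFne : (blk I F ∅).Nonempty := by
    rw [← Finset.card_pos]
    by_contra h
    rw [not_lt, Nat.le_zero] at h
    rw [h, zero_mul] at hcb
    have : 0 < l * (v - F.card).choose (2 * s - F.card) := by
      apply Nat.mul_pos hl
      apply Nat.choose_pos
      omega
    omega
  obtain ⟨b₀, hb₀⟩ := hFne
  simp only [blk, mem_filter, mem_univ, true_and, notMem_empty, false_implies, implies_true,
    and_true] at hb₀
  have hpts : (univ.filter (fun x => I x b₀)).card = k := hk b₀
  obtain ⟨A, hAsub, hAcard⟩ := Finset.exists_subset_card_eq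
    (show s ≤ (univ \ univ.filter (fun x => I x b₀)).card by
      rw [card_sdiff_of_subset (filter_subset _ _), card_univ, hX, hpts]; omega)
  have hdis : Disjoint F A := by
    refine Finset.disjoint_left.2 fun x hxF hxA => ?_
    exact (Finset.mem_sdiff.1 (hAsub hxA)).2 (mem_filter.2 ⟨mem_univ x, hb₀ x hxF⟩)
  have := ha s le_rfl F A hdis (by omega) hAcard
  rw [← this]
  rw [Finset.card_pos]
  refine ⟨b₀, ?_⟩
  simp only [blk, mem_filter, mem_univ, true_and]
  refine ⟨hb₀, fun x hxA hxb => ?_⟩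
  exact (Finset.mem_sdiff.1 (hAsub hxA)).2 (mem_filter.2 ⟨mem_univ x, hxb⟩)

lemma key_quad (hv : v ≥ k + s) (c : Finset X → ℚ)
    (hc : ∀ b : B, ∑ S ∈ (univ : Finset X).powersetCard s,
      c S * (if ∀ x ∈ S, I x b then (1:ℚ) else 0) = 0) :
    ∀ S ∈ (univ : Finset X).powersetCard s, c S = 0 := by
  classical
  set 𝒮 := (univ : Finset X).powersetCard s with h𝒮
  set ind : Finset X → B → ℚ := fun S b => if ∀ x ∈ S, I x b then (1:ℚ) else 0 with hind
  have h2sv : 2 * s ≤ v := le_trans hD.2.1 hD.2.2.1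
  have hXv : Fintype.card X = v := hD.2.2.2.2.1
  -- construct the constants a i
  have hex : ∀ i : ℕ, i ≤ s → ∃ m : ℕ, ∀ F A : Finset X, Disjoint F A →
      F.card = 2 * s - i → A.card = i → (blk I F A).card = m := by
    intro i hi
    obtain ⟨C, -, hCcard⟩ := Finset.exists_subset_card_eq
      (show 2 * s ≤ (univ : Finset X).card by rw [card_univ, hXv]; omega)
    obtain ⟨F, hFsub, hFcard⟩ := Finset.exists_subset_card_eq
      (show 2 * s - i ≤ C.card by omega)
    refine ⟨(blk I F (C \ F)).card, fun F' A' hd' hF' hA' => ?_⟩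
    refine blk_const hD i F' A' F (C \ F) hA' ?_ ?_ ?_ hd' Finset.disjoint_sdiff
    · rw [card_sdiff_of_subset hFsub, hCcard, hFcard]; omega
    · rw [hF', hFcard]
    · omega
  choose a' ha' using hex
  set a : ℕ → ℕ := fun i => if h : i ≤ s then a' i h else 0 with haf
  have ha : ∀ i, i ≤ s → ∀ F A : Finset X, Disjoint F A → F.card = 2 * s - i →
      A.card = i → (blk I F A).card = a i := by
    intro i hi F A h1 h2 h3
    rw [haf]
    simp only [hi, dif_pos]
    exact ha' i hi F A h1 h2 h3
  have has : 0 < a s := a_pos hD hv a ha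
  -- step 1+2 : expand the sum of squares
  have expand : (0:ℚ) = ∑ S ∈ 𝒮, ∑ T ∈ 𝒮, c S * c T * ((blk I (S ∪ T) ∅).card : ℚ) := by
    have h0 : (0:ℚ) = ∑ b : B, (∑ S ∈ 𝒮, c S * ind S b)^2 := by
      symm; apply Finset.sum_eq_zero; intro b _; rw [hc b]; ring
    rw [h0]
    have hsq : ∀ b : B, (∑ S ∈ 𝒮, c S * ind S b)^2
        = ∑ S ∈ 𝒮, ∑ T ∈ 𝒮, c S * c T * (ind S b * ind T b) := by
      intro b
      rw [sq, Finset.sum_mul_sum]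
      exact Finset.sum_congr rfl fun S _ => Finset.sum_congr rfl fun T _ => by ring
    simp_rw [hsq]
    rw [Finset.sum_comm]
    refine Finset.sum_congr rfl fun S hS => ?_
    rw [Finset.sum_comm]
    refine Finset.sum_congr rfl fun T hT => ?_
    rw [← Finset.mul_sum]
    congr 1
    have hmul : ∀ b : B, ind S b * ind T b = if (∀ x ∈ S ∪ T, I x b) then (1:ℚ) else 0 := by
      intro b
      simp only [hind, forall_mem_union]
      by_cases hS' : ∀ x ∈ S, I x b <;> by_cases hT' : ∀ x ∈ T, I x b
      · rw [if_pos hS', if_pos hT', if_pos ⟨hS', hT'⟩, mul_one]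
      · rw [if_pos hS', if_neg hT', if_neg (fun h => hT' h.2), one_mul]
      · rw [if_neg hS', zero_mul,
          if_neg (fun (h : (∀ x ∈ S, I x b) ∧ ∀ x ∈ T, I x b) => hS' h.1)]
      · rw [if_neg hS', zero_mul,
          if_neg (fun (h : (∀ x ∈ S, I x b) ∧ ∀ x ∈ T, I x b) => hS' h.1)]
    rw [Finset.sum_congr rfl fun b _ => hmul b, Finset.sum_boole]
    congr 1
    simp [blk]
  -- step 3 : expand the block counts
  have hmST : ∀ S ∈ 𝒮, ∀ T ∈ 𝒮, ((blk I (S ∪ T) ∅).card : ℚ)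
      = ∑ i ∈ Finset.range (s + 1), ((S ∩ T).card.choose i : ℚ) * (a i : ℚ) := by
    intro S hS T hT
    rw [h𝒮, mem_powersetCard] at hS hT
    have hmle : (S ∩ T).card ≤ s :=
      le_trans (card_le_card inter_subset_left) (le_of_eq hS.2)
    have hcard : (S ∪ T).card = 2 * s - (S ∩ T).card := by
      have h3 := Finset.card_union_add_card_inter S T
      have h1 := hS.2; have h2 := hT.2
      omega
    rw [lambda_expand hD a ha hmle hcard]
    push_cast
    rfl
  have expand2 : (0:ℚ) = ∑ i ∈ Finset.range (s + 1), (a i : ℚ) *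
      ∑ J ∈ (univ : Finset X).powersetCard i,
        (∑ S ∈ 𝒮.filter (fun S => J ⊆ S), c S)^2 := by
    have E3 : ∀ i ∈ Finset.range (s + 1),
        (∑ S ∈ 𝒮, ∑ T ∈ 𝒮, c S * c T * (((S ∩ T).card.choose i : ℚ) * (a i : ℚ)))
        = (a i : ℚ) * ∑ J ∈ (univ : Finset X).powersetCard i,
            (∑ S ∈ 𝒮.filter (fun S => J ⊆ S), c S)^2 := by
      intro i _
      have hchi : ∀ S ∈ 𝒮, ∀ T ∈ 𝒮, ((S ∩ T).card.choose i : ℚ)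
          = ∑ J ∈ (univ : Finset X).powersetCard i,
              (if J ⊆ S then (1:ℚ) else 0) * (if J ⊆ T then (1:ℚ) else 0) := by
        intro S hS T hT
        have hpt : ∀ J, (if J ⊆ S then (1:ℚ) else 0) * (if J ⊆ T then (1:ℚ) else 0)
            = if J ⊆ S ∧ J ⊆ T then (1:ℚ) else 0 := by
          intro J
          by_cases h1 : J ⊆ S <;> by_cases h2 : J ⊆ T <;> simp [h1, h2]
        rw [Finset.sum_congr rfl fun J _ => hpt J, Finset.sum_boole]
        have hfe : ((univ : Finset X).powersetCard i).filter (fun J => J ⊆ S ∧ J ⊆ T)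
            = (S ∩ T).powersetCard i := by
          ext J
          simp only [mem_filter, mem_powersetCard, subset_univ, true_and, subset_inter_iff]
          tauto
        rw [hfe, card_powersetCard]
      calc ∑ S ∈ 𝒮, ∑ T ∈ 𝒮, c S * c T * (((S ∩ T).card.choose i : ℚ) * (a i : ℚ))
          = ∑ S ∈ 𝒮, ∑ T ∈ 𝒮, ∑ J ∈ (univ : Finset X).powersetCard i,
              (a i : ℚ) * ((if J ⊆ S then c S else 0) * (if J ⊆ T then c T else 0)) := by
            refine Finset.sum_congr rfl fun S hS => Finset.sum_congr rfl fun T hT => ?_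
            rw [hchi S hS T hT, Finset.sum_mul, Finset.mul_sum]
            refine Finset.sum_congr rfl fun J _ => ?_
            by_cases h1 : J ⊆ S <;> by_cases h2 : J ⊆ T <;> simp [h1, h2] <;> ring
        _ = ∑ J ∈ (univ : Finset X).powersetCard i, (a i : ℚ) *
              ((∑ S ∈ 𝒮, if J ⊆ S then c S else 0) * (∑ T ∈ 𝒮, if J ⊆ T then c T else 0)) := by
            rw [Finset.sum_congr rfl fun S (_ : S ∈ 𝒮) => Finset.sum_comm (s := 𝒮)
              (t := (univ : Finset X).powersetCard i), Finset.sum_comm]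
            refine Finset.sum_congr rfl fun J _ => ?_
            rw [Finset.sum_mul_sum, Finset.mul_sum]
            refine Finset.sum_congr rfl fun S _ => ?_
            rw [Finset.mul_sum]
        _ = ∑ J ∈ (univ : Finset X).powersetCard i, (a i : ℚ) *
              (∑ S ∈ 𝒮.filter (fun S => J ⊆ S), c S)^2 := by
            refine Finset.sum_congr rfl fun J _ => ?_
            rw [Finset.sum_filter, sq]
        _ = (a i : ℚ) * ∑ J ∈ (univ : Finset X).powersetCard i,
              (∑ S ∈ 𝒮.filter (fun S => J ⊆ S), c S)^2 := by
            rw [Finset.mul_sum]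
    calc (0:ℚ) = ∑ S ∈ 𝒮, ∑ T ∈ 𝒮, c S * c T * ((blk I (S ∪ T) ∅).card : ℚ) := expand
      _ = ∑ S ∈ 𝒮, ∑ T ∈ 𝒮, c S * c T *
            (∑ i ∈ Finset.range (s + 1), ((S ∩ T).card.choose i : ℚ) * (a i : ℚ)) :=
          Finset.sum_congr rfl fun S hS => Finset.sum_congr rfl fun T hT => by
            rw [hmST S hS T hT]
      _ = ∑ i ∈ Finset.range (s + 1), ∑ S ∈ 𝒮, ∑ T ∈ 𝒮,
            c S * c T * (((S ∩ T).card.choose i : ℚ) * (a i : ℚ)) := by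
          simp_rw [Finset.mul_sum]
          exact (Finset.sum_congr rfl fun S _ => Finset.sum_comm).trans Finset.sum_comm
      _ = ∑ i ∈ Finset.range (s + 1), (a i : ℚ) *
            ∑ J ∈ (univ : Finset X).powersetCard i,
              (∑ S ∈ 𝒮.filter (fun S => J ⊆ S), c S)^2 := Finset.sum_congr rfl E3
  -- step 5 : conclude
  have hQnn : ∀ i ∈ Finset.range (s + 1), (0:ℚ) ≤ (a i : ℚ) *
      ∑ J ∈ (univ : Finset X).powersetCard i,
        (∑ S ∈ 𝒮.filter (fun S => J ⊆ S), c S)^2 := by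
    intro i _
    exact mul_nonneg (Nat.cast_nonneg _) (Finset.sum_nonneg fun J _ => sq_nonneg _)
  have hall := (Finset.sum_eq_zero_iff_of_nonneg hQnn).1 expand2.symm
  have hQs := hall s (Finset.mem_range.2 (Nat.lt_succ_self s))
  have hQs0 : ∑ J ∈ (univ : Finset X).powersetCard s,
      (∑ S ∈ 𝒮.filter (fun S => J ⊆ S), c S)^2 = 0 := by
    have hane : (a s : ℚ) ≠ 0 := Nat.cast_ne_zero.2 has.ne'
    exact (mul_eq_zero.1 hQs).resolve_left hane
  have hJall := (Finset.sum_eq_zero_iff_of_nonneg (fun J _ => sq_nonneg _)).1 hQs0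
  intro S hS
  have hsq0 := hJall S hS
  have hfilter : 𝒮.filter (fun T => S ⊆ T) = {S} := by
    ext T
    simp only [mem_filter, Finset.mem_singleton, h𝒮, mem_powersetCard, subset_univ, true_and]
    constructor
    · rintro ⟨hTc, hST⟩
      have hSc : S.card = s := (mem_powersetCard.1 (h𝒮 ▸ hS)).2
      exact (Finset.eq_of_subset_of_card_le hST (by rw [hTc, hSc])).symm
    · rintro rfl
      exact ⟨(mem_powersetCard.1 (h𝒮 ▸ hS)).2, subset_rfl⟩
  rw [hfilter, Finset.sum_singleton] at hsq0
  exact pow_eq_zero_iff (two_ne_zero) |>.1 hsq0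

end RWaux

/-- Ray-Chaudhuri–Wilson: a 2s-(v,k,λ) design with v ≥ k + s has b ≥ C(v,s). -/
theorem stmt9 {X B : Type*} [Fintype X] [Fintype B] (I : X → B → Prop)
    [∀ x b, Decidable (I x b)] {s v k l : ℕ} (hD : IsDesign X B I (2 * s) v k l)
    (hv : v ≥ k + s) :
    Fintype.card B ≥ v.choose s := by
  classical
  set 𝒮 := (univ : Finset X).powersetCard s with h𝒮
  have hLI : LinearIndependent ℚ
      (fun (S : {S // S ∈ 𝒮}) => (fun b => if ∀ x ∈ S.1, I x b then (1:ℚ) else 0 : B → ℚ)) := by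
    rw [Fintype.linearIndependent_iff]
    intro g hg j
    set c : Finset X → ℚ := fun S => if h : S ∈ 𝒮 then g ⟨S, h⟩ else 0 with hcdef
    have hc : ∀ b : B, ∑ S ∈ 𝒮, c S * (if ∀ x ∈ S, I x b then (1:ℚ) else 0) = 0 := by
      intro b
      have hb := congrFun hg b
      simp only [Finset.sum_apply, Pi.smul_apply, smul_eq_mul, Pi.zero_apply] at hb
      have hcg : ∑ i ∈ 𝒮.attach, c i.1 * (if ∀ x ∈ i.1, I x b then (1:ℚ) else 0)
           = ∑ i ∈ 𝒮.attach, g i * (if ∀ x ∈ i.1, I x b then (1:ℚ) else 0) :=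
        Finset.sum_congr rfl fun i _ => by rw [hcdef]; simp only [i.2, dif_pos]
      rw [← Finset.sum_attach 𝒮 (fun S => c S * (if ∀ x ∈ S, I x b then (1:ℚ) else 0)), hcg,
        ← Finset.univ_eq_attach]
      exact hb
    have hz := RWaux.key_quad hD hv c hc j.1 j.2
    rw [hcdef] at hz
    simpa only [j.2, dif_pos] using hz
  have hcard := hLI.fintype_card_le_finrank
  rw [Module.finrank_pi] at hcard
  have h1 : Fintype.card {S // S ∈ 𝒮} = 𝒮.card := Fintype.card_coe 𝒮
  have h2 : 𝒮.card = v.choose s := by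
    rw [h𝒮, card_powersetCard, card_univ, hD.2.2.2.2.1]
  omega
end

section
/- Let D be a t-(v,k,λ) design with t = 2s+1 odd and v - 1 ≥ k + s. Then the number of blocks b satisfies b ≥ 2·C(v-1, s). -/
open Finset

section RCW
variable {X B : Type*} [Fintype X] [Fintype B] [DecidableEq X] {I : X → B → Prop}
    [∀ x b, Decidable (I x b)]

variable (I) in
/-- points of a block -/
def pts (b : B) : Finset X := univ.filter fun x => I x b

variable (I) in
/-- number of blocks containing all of `A` and none of `C` -/
def deg (A C : Finset X) : ℕ :=
  (univ.filter fun b : B => A ⊆ pts I b ∧ Disjoint C (pts I b)).card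

lemma deg_empty_right (A : Finset X) :
    deg I A ∅ = (univ.filter fun b : B => A ⊆ pts I b).card := by
  simp [deg]

/-- the double-counting step. -/
lemma deg_step {k n : ℕ} (hk : ∀ b : B, (pts I b).card = k)
    {A : Finset X} {a : ℕ} (hA : A.card = a) (hak : a ≤ k)
    (hn : ∀ A' : Finset X, A'.card = a + 1 → deg I A' ∅ = n) :
    deg I A ∅ * (k - a) = (Fintype.card X - a) * n := by
  have e1 : ∀ b : B, (if A ⊆ pts I b then (k - a) else 0)
      = ∑ y ∈ (univ : Finset X) \ A, (if insert y A ⊆ pts I b then 1 else 0) := by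
    intro b
    by_cases hb : A ⊆ pts I b
    · rw [if_pos hb]
      have h2 : ∀ y ∈ (univ : Finset X) \ A,
          (if insert y A ⊆ pts I b then 1 else 0) = if y ∈ pts I b then 1 else 0 := by
        intro y hy
        simp [Finset.insert_subset_iff, hb]
      rw [Finset.sum_congr rfl h2, ← Finset.card_filter]
      have h3 : (univ \ A).filter (· ∈ pts I b) = pts I b \ A := by
        ext y; simp [mem_sdiff, and_comm]
      rw [h3, Finset.card_sdiff_of_subset hb, hk b, hA]
    · rw [if_neg hb]
      symm
      apply Finset.sum_eq_zero
      intro y _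
      rw [if_neg]
      intro hcon
      exact hb (Finset.Subset.trans (Finset.subset_insert y A) hcon)
  calc deg I A ∅ * (k - a)
      = ∑ _b ∈ univ.filter (fun b : B => A ⊆ pts I b), (k - a) := by
        rw [Finset.sum_const, deg_empty_right, smul_eq_mul]
    _ = ∑ b : B, (if A ⊆ pts I b then (k - a) else 0) := by
        rw [Finset.sum_filter]
    _ = ∑ b : B, ∑ y ∈ (univ : Finset X) \ A, (if insert y A ⊆ pts I b then 1 else 0) := by
        exact Finset.sum_congr rfl fun b _ => e1 b
    _ = ∑ y ∈ (univ : Finset X) \ A, ∑ b : B, (if insert y A ⊆ pts I b then 1 else 0) :=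
        Finset.sum_comm
    _ = ∑ y ∈ (univ : Finset X) \ A, n := by
        apply Finset.sum_congr rfl
        intro y hy
        rw [← Finset.card_filter, ← deg_empty_right, hn]
        rw [Finset.card_insert_of_notMem (by simpa using (Finset.mem_sdiff.mp hy).2), hA]
    _ = (Fintype.card X - a) * n := by
        rw [Finset.sum_const, smul_eq_mul, Finset.card_sdiff_of_subset (Finset.subset_univ A),
          Finset.card_univ, hA]

end RCW

section RCW2
variable {X B : Type*} [Fintype X] [Fintype B] [DecidableEq X] {I : X → B → Prop}
    [∀ x b, Decidable (I x b)] {t v k l : ℕ}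

/-- partition of blocks by whether they contain `z`. -/
lemma deg_split {A C : Finset X} {z : X} (hzA : z ∉ A) (hzC : z ∉ C) :
    deg I A C = deg I (insert z A) C + deg I A (insert z C) := by
  classical
  unfold deg
  rw [← Finset.card_filter_add_card_filter_not (s := univ.filter
      fun b : B => A ⊆ pts I b ∧ Disjoint C (pts I b)) (p := fun b => z ∈ pts I b)]
  rw [Finset.filter_filter, Finset.filter_filter]
  congr 2
  · apply Finset.filter_congr; intro b _
    simp only [Finset.insert_subset_iff, Finset.disjoint_insert_left]
    tauto
  · apply Finset.filter_congr; intro b _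
    simp only [Finset.insert_subset_iff, Finset.disjoint_insert_left]
    tauto

/-- all `a`-sets have the same degree, for `a ≤ t`. -/
lemma lam_const (hcard : Fintype.card X = v)
    (hk : ∀ b : B, (pts I b).card = k)
    (hl : ∀ S : Finset X, S.card = t → deg I S ∅ = l)
    (htk : t ≤ k) (hkv : k ≤ v) :
    ∀ a ≤ t, ∃ n, ∀ A : Finset X, A.card = a → deg I A ∅ = n := by
  have key : ∀ d, d ≤ t → ∃ n, ∀ A : Finset X, A.card = t - d → deg I A ∅ = n := by
    intro d
    induction d with
    | zero => intro _; exact ⟨l, fun A hA => hl A (by simpa using hA)⟩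
    | succ d ih =>
      intro hd
      obtain ⟨n, hn⟩ := ih (Nat.le_of_succ_le hd)
      set a := t - (d + 1) with ha
      have ha1 : a + 1 = t - d := by omega
      have hak : a ≤ k := by omega
      have hn' : ∀ A' : Finset X, A'.card = a + 1 → deg I A' ∅ = n := by
        intro A' hA'; exact hn A' (by omega)
      -- pick a concrete set of size a
      obtain ⟨A₀, _, hA₀⟩ := Finset.exists_subset_card_eq (s := (univ : Finset X)) (n := a)
        (by rw [Finset.card_univ, hcard]; omega)
      refine ⟨deg I A₀ ∅, fun A hA => ?_⟩
      have e1 := deg_step hk hA hak hn'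
      have e2 := deg_step hk hA₀ hak hn'
      have hka : 0 < k - a := by omega
      exact Nat.eq_of_mul_eq_mul_right hka (by rw [e1, e2])
  intro a hat
  obtain ⟨n, hn⟩ := key (t - a) (by omega)
  exact ⟨n, fun A hA => hn A (by omega)⟩

/-- the master constancy lemma. -/
lemma master (hcard : Fintype.card X = v)
    (hk : ∀ b : B, (pts I b).card = k)
    (hl : ∀ S : Finset X, S.card = t → deg I S ∅ = l)
    (htk : t ≤ k) (hkv : k ≤ v) :
    ∀ c a, a + c ≤ t → ∃ n, ∀ A C : Finset X, A.card = a → C.card = c →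
      Disjoint A C → deg I A C = n := by
  intro c
  induction c with
  | zero =>
    intro a hat
    obtain ⟨n, hn⟩ := lam_const hcard hk hl htk hkv a (by omega)
    refine ⟨n, fun A C hA hC _ => ?_⟩
    rw [Finset.card_eq_zero.mp hC]
    exact hn A hA
  | succ c ih =>
    intro a hat
    obtain ⟨n₁, hn₁⟩ := ih a (by omega)
    obtain ⟨n₂, hn₂⟩ := ih (a + 1) (by omega)
    refine ⟨n₁ - n₂, fun A C hA hC hAC => ?_⟩
    obtain ⟨z, hz⟩ := Finset.card_pos.mp (by omega : 0 < C.card)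
    set C' := C.erase z with hC'
    have hzC' : z ∉ C' := Finset.notMem_erase z C
    have hzA : z ∉ A := fun h => (Finset.disjoint_left.mp hAC h) hz
    have hCins : C = insert z C' := by
      rw [hC', Finset.insert_erase hz]
    have hC'card : C'.card = c := by
      rw [hC', Finset.card_erase_of_mem hz, hC]; omega


    have hAC' : Disjoint A C' := hAC.mono_right (Finset.erase_subset z C)
    have hsplit := deg_split (I := I) (B := B) hzA hzC'
    have hd1 : deg I A C' = n₁ := hn₁ A C' hA hC'card hAC'
    have hd2 : deg I (insert z A) C' = n₂ := by
      apply hn₂ (insert z A) C' (by rw [Finset.card_insert_of_notMem hzA, hA]) hC'card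
      rw [Finset.disjoint_insert_left]
      exact ⟨hzC', hAC'⟩
    rw [hCins]
    omega

end RCW2

section RCW3
variable {X B : Type*} [Fintype X] [Fintype B] [DecidableEq X] {I : X → B → Prop}
    [∀ x b, Decidable (I x b)]

/-- partition blocks (⊇ A, avoiding C) by their intersection with M. -/
lemma deg_decomp_set {A C M : Finset X} (hAM : Disjoint A M) (hCM : Disjoint C M) :
    deg I A C = ∑ E ∈ M.powerset, deg I (A ∪ E) (C ∪ (M \ E)) := by
  classical
  unfold deg
  rw [Finset.card_eq_sum_card_fiberwise (f := fun b : B => M ∩ pts I b)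
    (t := M.powerset) (fun b _ => Finset.mem_powerset.mpr Finset.inter_subset_left)]
  apply Finset.sum_congr rfl
  intro E hE
  rw [Finset.mem_powerset] at hE
  rw [Finset.filter_filter]
  congr 1
  apply Finset.filter_congr
  intro b _
  simp only [Finset.union_subset_iff, Finset.disjoint_union_left]
  constructor
  · rintro ⟨⟨hA, hC⟩, hME⟩
    refine ⟨⟨hA, ?_⟩, hC, ?_⟩
    · intro y hy
      have : y ∈ M ∩ pts I b := by rw [hME]; exact hy
      exact (Finset.mem_inter.mp this).2
    · rw [Finset.disjoint_left]
      intro y hy hyb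
      rw [Finset.mem_sdiff] at hy
      exact hy.2 (by rw [← hME]; exact Finset.mem_inter.mpr ⟨hy.1, hyb⟩)
  · rintro ⟨⟨hA, hEb⟩, hC, hMEb⟩
    refine ⟨⟨hA, hC⟩, ?_⟩
    ext y
    rw [Finset.mem_inter]
    constructor
    · rintro ⟨hyM, hyb⟩
      by_contra hyE
      exact Finset.disjoint_left.mp hMEb (Finset.mem_sdiff.mpr ⟨hyM, hyE⟩) hyb
    · intro hyE
      exact ⟨hE hyE, hEb hyE⟩

end RCW3

section RCW4
variable {X B : Type*} [Fintype X] [Fintype B] [DecidableEq X] {I : X → B → Prop}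
    [∀ x b, Decidable (I x b)] {t v k l : ℕ}

lemma exists_degFun (hcard : Fintype.card X = v)
    (hk : ∀ b : B, (pts I b).card = k)
    (hl : ∀ S : Finset X, S.card = t → deg I S ∅ = l)
    (htk : t ≤ k) (hkv : k ≤ v) :
    ∃ f : ℕ → ℕ → ℕ, ∀ a c, a + c ≤ t → ∀ A C : Finset X, A.card = a → C.card = c →
      Disjoint A C → deg I A C = f a c := by
  have H := master hcard hk hl htk hkv
  refine ⟨fun a c => if h : a + c ≤ t then (H c a h).choose else 0, ?_⟩
  intro a c h A C hA hC hAC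
  simp only [dif_pos h]
  exact (H c a h).choose_spec A C hA hC hAC

/-- concrete pairwise disjoint triple of prescribed sizes. -/
lemma exists_triple (hcard : Fintype.card X = v) {a c m : ℕ} (h : a + c + m ≤ v) :
    ∃ A C M : Finset X, A.card = a ∧ C.card = c ∧ M.card = m ∧
      Disjoint A C ∧ Disjoint A M ∧ Disjoint C M := by
  obtain ⟨P, _, hP⟩ := Finset.exists_subset_card_eq
    (show a + c + m ≤ (univ : Finset X).card by rw [Finset.card_univ, hcard]; exact h)
  obtain ⟨Q, hQP, hQ⟩ := Finset.exists_subset_card_eq (show a + c ≤ P.card by omega)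
  obtain ⟨A, hAQ, hA⟩ := Finset.exists_subset_card_eq (show a ≤ Q.card by omega)
  refine ⟨A, Q \ A, P \ Q, hA, ?_, ?_, ?_, ?_, ?_⟩
  · rw [Finset.card_sdiff_of_subset hAQ, hQ, hA]; omega
  · rw [Finset.card_sdiff_of_subset hQP, hP, hQ]; omega
  · exact Finset.disjoint_sdiff
  · exact (Finset.disjoint_sdiff).mono_left hAQ
  · exact (Finset.disjoint_sdiff).mono_left Finset.sdiff_subset

lemma degFun_decomp (hcard : Fintype.card X = v)
    (hk : ∀ b : B, (pts I b).card = k)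
    (htk : t ≤ k) (hkv : k ≤ v)
    {f : ℕ → ℕ → ℕ}
    (hf : ∀ a c, a + c ≤ t → ∀ A C : Finset X, A.card = a → C.card = c →
      Disjoint A C → deg I A C = f a c)
    {a c m : ℕ} (h : a + c + m ≤ t) :
    f a c = ∑ j ∈ Finset.range (m + 1), m.choose j * f (a + j) (c + (m - j)) := by
  obtain ⟨A, C, M, hA, hC, hM, hAC, hAM, hCM⟩ := exists_triple (X := X) hcard
    (show a + c + m ≤ v by omega)
  have e0 : deg I A C = f a c := hf a c (by omega) A C hA hC hAC
  rw [← e0, deg_decomp_set hAM hCM]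
  rw [Finset.powerset_card_disjiUnion]; refine (Finset.sum_disjiUnion _ _ _).trans ?_; rw [hM]
  apply Finset.sum_congr rfl
  intro j hj
  rw [Finset.mem_range] at hj
  have inner : ∀ E ∈ M.powersetCard j, deg I (A ∪ E) (C ∪ (M \ E)) = f (a + j) (c + (m - j)) := by
    intro E hE
    rw [Finset.mem_powersetCard] at hE
    obtain ⟨hEM, hEcard⟩ := hE
    apply hf _ _ (by omega)
    · rw [Finset.card_union_of_disjoint (hAM.mono_right hEM), hA, hEcard]
    · rw [Finset.card_union_of_disjoint (hCM.mono_right Finset.sdiff_subset),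
        Finset.card_sdiff_of_subset hEM, hC, hM, hEcard]
    · rw [Finset.disjoint_union_left, Finset.disjoint_union_right, Finset.disjoint_union_right]
      exact ⟨⟨hAC, hAM.mono_right Finset.sdiff_subset⟩,
        ⟨(hCM.symm).mono_left hEM, Finset.disjoint_sdiff⟩⟩
  rw [Finset.sum_congr rfl inner, Finset.sum_const, Finset.card_powersetCard, hM, smul_eq_mul]

end RCW4

section RCW5
variable {α : Type*} [DecidableEq α]

open scoped BigOperators

lemma quad_form (Y : Finset α) (s j : ℕ) (a : Finset α → ℚ) :
    ∑ S ∈ Y.powersetCard s, ∑ T ∈ Y.powersetCard s,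
        a S * a T * (((S ∩ T).card.choose j : ℕ) : ℚ)
    = ∑ J ∈ Y.powersetCard j,
        (∑ S ∈ Y.powersetCard s, if J ⊆ S then a S else 0) ^ 2 := by
  have key : ∀ S ∈ Y.powersetCard s, ∀ T ∈ Y.powersetCard s,
      (((S ∩ T).card.choose j : ℕ) : ℚ)
        = ∑ J ∈ Y.powersetCard j, if J ⊆ S ∧ J ⊆ T then (1 : ℚ) else 0 := by
    intro S hS T hT
    rw [Finset.sum_boole]
    have : (Y.powersetCard j).filter (fun J => J ⊆ S ∧ J ⊆ T) = (S ∩ T).powersetCard j := by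
      ext J
      simp only [Finset.mem_filter, Finset.mem_powersetCard, Finset.subset_inter_iff]
      constructor
      · rintro ⟨⟨_, hcard⟩, hJS, hJT⟩; exact ⟨⟨hJS, hJT⟩, hcard⟩
      · rintro ⟨⟨hJS, hJT⟩, hcard⟩
        exact ⟨⟨hJS.trans (Finset.mem_powersetCard.mp hS).1, hcard⟩, hJS, hJT⟩
    rw [this, Finset.card_powersetCard]
  calc ∑ S ∈ Y.powersetCard s, ∑ T ∈ Y.powersetCard s,
          a S * a T * (((S ∩ T).card.choose j : ℕ) : ℚ)
      = ∑ S ∈ Y.powersetCard s, ∑ T ∈ Y.powersetCard s, ∑ J ∈ Y.powersetCard j,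
          (if J ⊆ S then a S else 0) * (if J ⊆ T then a T else 0) := by
        refine Finset.sum_congr rfl fun S hS => Finset.sum_congr rfl fun T hT => ?_
        rw [key S hS T hT, Finset.mul_sum]
        refine Finset.sum_congr rfl fun J _ => ?_
        by_cases h1 : J ⊆ S <;> by_cases h2 : J ⊆ T <;> simp [h1, h2]
    _ = ∑ S ∈ Y.powersetCard s, ∑ J ∈ Y.powersetCard j, ∑ T ∈ Y.powersetCard s,
          (if J ⊆ S then a S else 0) * (if J ⊆ T then a T else 0) :=
        Finset.sum_congr rfl fun S _ => Finset.sum_comm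
    _ = ∑ J ∈ Y.powersetCard j, ∑ S ∈ Y.powersetCard s, ∑ T ∈ Y.powersetCard s,
          (if J ⊆ S then a S else 0) * (if J ⊆ T then a T else 0) :=
        Finset.sum_comm
    _ = ∑ J ∈ Y.powersetCard j,
          (∑ S ∈ Y.powersetCard s, if J ⊆ S then a S else 0) ^ 2 := by
        refine Finset.sum_congr rfl fun J _ => ?_
        rw [sq, Finset.sum_mul_sum]

lemma gram_bound (Y : Finset α) (s : ℕ) (d : ℕ → ℕ) (g : ℕ → ℕ)
    (hg : ∀ mm ≤ s, (g mm : ℚ) = ∑ j ∈ Finset.range (s + 1),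
      ((mm.choose j : ℕ) : ℚ) * (d j : ℚ))
    (a : Finset α → ℚ) :
    (d s : ℚ) * ∑ S ∈ Y.powersetCard s, (a S) ^ 2
      ≤ ∑ S ∈ Y.powersetCard s, ∑ T ∈ Y.powersetCard s,
          a S * a T * (g ((S ∩ T).card) : ℚ) := by
  have hmm : ∀ S ∈ Y.powersetCard s, ∀ T ∈ Y.powersetCard s, (S ∩ T).card ≤ s := by
    intro S hS T hT
    exact le_trans (Finset.card_le_card Finset.inter_subset_left)
      (le_of_eq (Finset.mem_powersetCard.mp hS).2)
  have step1 : ∑ S ∈ Y.powersetCard s, ∑ T ∈ Y.powersetCard s,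
        a S * a T * (g ((S ∩ T).card) : ℚ)
      = ∑ j ∈ Finset.range (s + 1), (d j : ℚ) *
          ∑ J ∈ Y.powersetCard j, (∑ S ∈ Y.powersetCard s, if J ⊆ S then a S else 0) ^ 2 := by
    calc ∑ S ∈ Y.powersetCard s, ∑ T ∈ Y.powersetCard s, a S * a T * (g ((S ∩ T).card) : ℚ)
        = ∑ S ∈ Y.powersetCard s, ∑ T ∈ Y.powersetCard s, ∑ j ∈ Finset.range (s + 1),
            (d j : ℚ) * (a S * a T * (((S ∩ T).card.choose j : ℕ) : ℚ)) := by
          refine Finset.sum_congr rfl fun S hS => Finset.sum_congr rfl fun T hT => ?_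
          rw [hg _ (hmm S hS T hT), Finset.mul_sum]
          refine Finset.sum_congr rfl fun j _ => by ring
      _ = ∑ S ∈ Y.powersetCard s, ∑ j ∈ Finset.range (s + 1), ∑ T ∈ Y.powersetCard s,
            (d j : ℚ) * (a S * a T * (((S ∩ T).card.choose j : ℕ) : ℚ)) :=
          Finset.sum_congr rfl fun S _ => Finset.sum_comm
      _ = ∑ j ∈ Finset.range (s + 1), ∑ S ∈ Y.powersetCard s, ∑ T ∈ Y.powersetCard s,
            (d j : ℚ) * (a S * a T * (((S ∩ T).card.choose j : ℕ) : ℚ)) :=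
          Finset.sum_comm
      _ = ∑ j ∈ Finset.range (s + 1), (d j : ℚ) * ∑ S ∈ Y.powersetCard s,
            ∑ T ∈ Y.powersetCard s, a S * a T * (((S ∩ T).card.choose j : ℕ) : ℚ) := by
          refine Finset.sum_congr rfl fun j _ => ?_
          rw [Finset.mul_sum]
          refine Finset.sum_congr rfl fun S _ => ?_
          rw [Finset.mul_sum]
      _ = _ := by
          refine Finset.sum_congr rfl fun j _ => ?_
          rw [quad_form]
  rw [step1]
  have hlast : (d s : ℚ) * ∑ S ∈ Y.powersetCard s, (a S) ^ 2
      = (d s : ℚ) * ∑ J ∈ Y.powersetCard s,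
          (∑ S ∈ Y.powersetCard s, if J ⊆ S then a S else 0) ^ 2 := by
    congr 1
    refine Finset.sum_congr rfl fun J hJ => ?_
    congr 1
    rw [Finset.sum_eq_single J]
    · simp
    · intro S hS hSJ
      rw [if_neg]
      intro hsub
      exact hSJ (Finset.eq_of_subset_of_card_le hsub (le_of_eq
        ((Finset.mem_powersetCard.mp hS).2.trans
          ((Finset.mem_powersetCard.mp hJ).2.symm)))).symm
    · intro h; exact absurd hJ h
  rw [hlast]
  have : ∀ j ∈ Finset.range (s + 1), (0 : ℚ) ≤ (d j : ℚ) *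
      ∑ J ∈ Y.powersetCard j, (∑ S ∈ Y.powersetCard s, if J ⊆ S then a S else 0) ^ 2 := by
    intro j _
    apply mul_nonneg (by positivity)
    exact Finset.sum_nonneg fun J _ => sq_nonneg _
  calc (d s : ℚ) * ∑ J ∈ Y.powersetCard s,
          (∑ S ∈ Y.powersetCard s, if J ⊆ S then a S else 0) ^ 2
      ≤ ∑ j ∈ Finset.range (s + 1), (d j : ℚ) *
          ∑ J ∈ Y.powersetCard j, (∑ S ∈ Y.powersetCard s, if J ⊆ S then a S else 0) ^ 2 := by
        apply Finset.single_le_sum this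
        simp
    _ = _ := rfl

end RCW5

section RCW6
variable {X B : Type*} [Fintype X] [Fintype B] [DecidableEq X] {I : X → B → Prop}
    [∀ x b, Decidable (I x b)] {t v k l : ℕ}

lemma degFun_pos (hcard : Fintype.card X = v)
    (hk : ∀ b : B, (pts I b).card = k)
    (hl : ∀ S : Finset X, S.card = t → deg I S ∅ = l)
    (hl0 : 0 < l) (htk : t ≤ k) (hkv : k ≤ v)
    {f : ℕ → ℕ → ℕ}
    (hf : ∀ a c, a + c ≤ t → ∀ A C : Finset X, A.card = a → C.card = c →
      Disjoint A C → deg I A C = f a c)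
    {a c : ℕ} (hac : a + c ≤ t) (hak : a ≤ k) (hck : k + c ≤ v) :
    0 < f a c := by
  -- there is a block
  obtain ⟨S₀, _, hS₀⟩ := Finset.exists_subset_card_eq
    (show t ≤ (univ : Finset X).card by rw [Finset.card_univ, hcard]; omega)
  have : 0 < deg I S₀ ∅ := by rw [hl S₀ hS₀]; exact hl0
  rw [deg] at this
  obtain ⟨b₀, hb₀⟩ := Finset.card_pos.mp this
  obtain ⟨A, hApts, hA⟩ := Finset.exists_subset_card_eq
    (show a ≤ (pts I b₀).card by rw [hk b₀]; omega)
  obtain ⟨C, hCpts, hC⟩ := Finset.exists_subset_card_eq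
    (show c ≤ ((univ : Finset X) \ pts I b₀).card by
      rw [Finset.card_sdiff_of_subset (Finset.subset_univ _), Finset.card_univ, hcard, hk b₀]; omega)
  have hdisj : Disjoint A C := by
    rw [Finset.disjoint_left]
    intro y hyA hyC
    exact (Finset.mem_sdiff.mp (hCpts hyC)).2 (hApts hyA)
  rw [← hf a c hac A C hA hC hdisj]
  apply Finset.card_pos.mpr
  refine ⟨b₀, Finset.mem_filter.mpr ⟨Finset.mem_univ _, hApts, ?_⟩⟩
  rw [Finset.disjoint_left]
  intro y hyC
  exact (Finset.mem_sdiff.mp (hCpts hyC)).2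

/-- reflection of the decomposition: for `mm ≤ s` and `a + 1 + mm = t`,
`f (a' ) c'` expands with coefficients independent of `mm`. -/
lemma degFun_reflect (hcard : Fintype.card X = v)
    (hk : ∀ b : B, (pts I b).card = k)
    (htk : t ≤ k) (hkv : k ≤ v)
    {f : ℕ → ℕ → ℕ}
    (hf : ∀ a c, a + c ≤ t → ∀ A C : Finset X, A.card = a → C.card = c →
      Disjoint A C → deg I A C = f a c)
    {w c s mm : ℕ} (hmm : mm ≤ s) (hsw : s ≤ w) (hwt : w + c ≤ t) :
    f (w - mm) c = ∑ j ∈ Finset.range (s + 1), mm.choose j * f (w - j) (c + j) := by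
  have base := degFun_decomp hcard hk htk hkv hf
    (show (w - mm) + c + mm ≤ t by omega)
  have e1 : ∑ j ∈ Finset.range (mm + 1), mm.choose j * f ((w - mm) + j) (c + (mm - j))
      = ∑ j ∈ Finset.range (mm + 1), mm.choose j * f (w - j) (c + j) := by
    rw [← Finset.sum_range_reflect (fun j => mm.choose j * f (w - j) (c + j)) (mm + 1)]
    refine Finset.sum_congr rfl fun j hj => ?_
    rw [Finset.mem_range] at hj
    have h1 : mm + 1 - 1 - j = mm - j := by omega
    rw [h1, Nat.choose_symm (by omega : j ≤ mm)]
    congr 2 <;> omega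
  have e2 : ∑ j ∈ Finset.range (mm + 1), mm.choose j * f (w - j) (c + j)
      = ∑ j ∈ Finset.range (s + 1), mm.choose j * f (w - j) (c + j) := by
    apply Finset.sum_subset
    · intro x hx
      rw [Finset.mem_range] at *
      omega
    · intro x _ hx
      rw [Finset.mem_range] at hx
      rw [Nat.choose_eq_zero_of_lt (by omega), zero_mul]
  rw [base, e1, e2]

end RCW6


/-- Ray-Chaudhuri–Wilson (odd case): a (2s+1)-(v,k,λ) design with v - 1 ≥ k + s
has b ≥ 2·C(v-1,s). -/
theorem stmt10 {X B : Type*} [Fintype X] [Fintype B] (I : X → B → Prop)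
    [∀ x b, Decidable (I x b)] {s v k l : ℕ}
    (hD : IsDesign X B I (2 * s + 1) v k l) (hv : v - 1 ≥ k + s) :
    Fintype.card B ≥ 2 * (v - 1).choose s := by
  classical
  obtain ⟨ht, htk, hkv, hl0, hcard, hK, hL⟩ := hD
  have hk' : ∀ b : B, (pts I b).card = k := fun b => hK b
  have hl' : ∀ S : Finset X, S.card = 2 * s + 1 → deg I S ∅ = l := by
    intro S hS
    rw [← hL S hS, deg]
    congr 1
    ext b
    simp [pts, Finset.subset_iff]
  have hvk : k + s + 1 ≤ v := by omega
  obtain ⟨f, hf⟩ := exists_degFun hcard hk' hl' htk hkv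
  have hX : Nonempty X := Fintype.card_pos_iff.mp (by rw [hcard]; omega)
  obtain ⟨x₀⟩ := hX
  set Y : Finset X := univ.erase x₀ with hYdef
  have hYcard : Y.card = v - 1 := by
    rw [hYdef, Finset.card_erase_of_mem (Finset.mem_univ _), Finset.card_univ, hcard]
  set P : Finset (Finset X) := Y.powersetCard s with hPdef
  -- the two families of vectors
  set vv : Finset X → B → ℚ := fun S b => if insert x₀ S ⊆ pts I b then 1 else 0 with hvv
  set ww : Finset X → B → ℚ :=
    fun S b => if S ⊆ pts I b ∧ Disjoint {x₀} (pts I b) then 1 else 0 with hww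
  -- membership facts
  have hmemP : ∀ S ∈ P, S ⊆ Y ∧ S.card = s := fun S hS => Finset.mem_powersetCard.mp hS
  have hx₀ : ∀ S ∈ P, x₀ ∉ S := by
    intro S hS h
    exact (Finset.mem_erase.mp ((hmemP S hS).1 h)).1 rfl
  have hcapcard : ∀ S ∈ P, ∀ T ∈ P, (S ∩ T).card ≤ s := by
    intro S hS T hT
    exact le_trans (Finset.card_le_card Finset.inter_subset_left) (le_of_eq (hmemP S hS).2)
  have hcupcard : ∀ S ∈ P, ∀ T ∈ P, (S ∪ T).card = 2 * s - (S ∩ T).card := by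
    intro S hS T hT
    have := Finset.card_union_add_card_inter S T
    have h1 := (hmemP S hS).2
    have h2 := (hmemP T hT).2
    omega
  -- Gram identities
  have gv : ∀ S ∈ P, ∀ T ∈ P,
      (∑ b : B, vv S b * vv T b) = (f (2 * s + 1 - (S ∩ T).card) 0 : ℚ) := by
    intro S hS T hT
    have e1 : ∀ b : B, vv S b * vv T b
        = if insert x₀ (S ∪ T) ⊆ pts I b then (1 : ℚ) else 0 := by
      intro b
      rw [hvv]
      simp only [Finset.insert_subset_iff, Finset.union_subset_iff]
      by_cases h1 : x₀ ∈ pts I b <;> by_cases h2 : S ⊆ pts I b <;>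
        by_cases h3 : T ⊆ pts I b <;> simp [h1, h2, h3]
    rw [Finset.sum_congr rfl fun b _ => e1 b, Finset.sum_boole]
    have hins : (insert x₀ (S ∪ T)).card = 2 * s + 1 - (S ∩ T).card := by
      rw [Finset.card_insert_of_notMem (by
        rw [Finset.mem_union]; rintro (h | h)
        exacts [hx₀ S hS h, hx₀ T hT h])]
      have := hcupcard S hS T hT
      have := hcapcard S hS T hT
      omega
    have : (univ.filter fun b : B => insert x₀ (S ∪ T) ⊆ pts I b).card
        = f (2 * s + 1 - (S ∩ T).card) 0 := by
      rw [← deg_empty_right]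
      exact hf _ 0 (by omega) _ ∅ hins (Finset.card_empty) (Finset.disjoint_empty_right _)
    rw [this]
  have gw : ∀ S ∈ P, ∀ T ∈ P,
      (∑ b : B, ww S b * ww T b) = (f (2 * s - (S ∩ T).card) 1 : ℚ) := by
    intro S hS T hT
    have e1 : ∀ b : B, ww S b * ww T b
        = if (S ∪ T) ⊆ pts I b ∧ Disjoint {x₀} (pts I b) then (1 : ℚ) else 0 := by
      intro b
      rw [hww]
      simp only [Finset.union_subset_iff]
      by_cases h1 : Disjoint {x₀} (pts I b) <;> by_cases h2 : S ⊆ pts I b <;>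
        by_cases h3 : T ⊆ pts I b <;> simp [h1, h2, h3]
    rw [Finset.sum_congr rfl fun b _ => e1 b, Finset.sum_boole]
    have hx₀ST : x₀ ∉ S ∪ T := by
      rw [Finset.mem_union]; rintro (h | h)
      exacts [hx₀ S hS h, hx₀ T hT h]
    have : (univ.filter fun b : B =>
        (S ∪ T) ⊆ pts I b ∧ Disjoint {x₀} (pts I b)).card = f (2 * s - (S ∩ T).card) 1 := by
      have := hf (2 * s - (S ∩ T).card) 1 (by
        have := hcapcard S hS T hT; omega) (S ∪ T) {x₀}
        (hcupcard S hS T hT) (Finset.card_singleton x₀)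
        (Finset.disjoint_singleton_right.mpr hx₀ST)
      rw [← this, deg]
    rw [this]
  have gcross : ∀ S T : Finset X, (∑ b : B, vv S b * ww T b) = 0 := by
    intro S T
    apply Finset.sum_eq_zero
    intro b _
    rw [hvv, hww]
    by_cases h1 : insert x₀ S ⊆ pts I b
    · have hx : x₀ ∈ pts I b := h1 (Finset.mem_insert_self _ _)
      have : ¬(T ⊆ pts I b ∧ Disjoint {x₀} (pts I b)) := by
        rintro ⟨_, hd⟩
        exact Finset.disjoint_singleton_left.mp hd hx
      simp only []
      rw [if_pos h1, if_neg this, one_mul]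
    · simp only []
      rw [if_neg h1, zero_mul]
  -- expansion functions
  have hg₁ : ∀ mm ≤ s, ((f (2 * s + 1 - mm) 0 : ℕ) : ℚ) = ∑ j ∈ Finset.range (s + 1),
      ((mm.choose j : ℕ) : ℚ) * ((f (2 * s + 1 - j) (0 + j) : ℕ) : ℚ) := by
    intro mm hmm
    have := degFun_reflect hcard hk' htk hkv hf (w := 2 * s + 1) (c := 0) (s := s)
      hmm (by omega) (by omega)
    exact_mod_cast congrArg (Nat.cast : ℕ → ℚ) this
  have hg₂ : ∀ mm ≤ s, ((f (2 * s - mm) 1 : ℕ) : ℚ) = ∑ j ∈ Finset.range (s + 1),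
      ((mm.choose j : ℕ) : ℚ) * ((f (2 * s - j) (1 + j) : ℕ) : ℚ) := by
    intro mm hmm
    have := degFun_reflect hcard hk' htk hkv hf (w := 2 * s) (c := 1) (s := s)
      hmm (by omega) (by omega)
    exact_mod_cast congrArg (Nat.cast : ℕ → ℚ) this
  -- positivity of the leading coefficients
  have hd₁ : 0 < f (2 * s + 1 - s) (0 + s) :=
    degFun_pos hcard hk' hl' hl0 htk hkv hf (by omega) (by omega) (by omega)
  have hd₂ : 0 < f (2 * s - s) (1 + s) :=
    degFun_pos hcard hk' hl' hl0 htk hkv hf (by omega) (by omega) (by omega)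
  -- swap lemma for double sums against blocks
  have swap3 : ∀ (x y : Finset X → B → ℚ),
      ∑ b : B, (∑ S ∈ P, x S b) * (∑ T ∈ P, y T b)
      = ∑ S ∈ P, ∑ T ∈ P, ∑ b : B, x S b * y T b := by
    intro x y
    have e1 : ∀ b : B, (∑ S ∈ P, x S b) * (∑ T ∈ P, y T b)
        = ∑ S ∈ P, ∑ T ∈ P, x S b * y T b := fun b => Finset.sum_mul_sum _ _ _ _
    rw [Finset.sum_congr rfl fun b _ => e1 b, Finset.sum_comm]
    exact Finset.sum_congr rfl fun S _ => Finset.sum_comm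
  -- linear independence of the combined family
  set u : (↥P ⊕ ↥P) → (B → ℚ) := Sum.elim (fun S => vv ↑S) (fun S => ww ↑S) with hu
  have hind : LinearIndependent ℚ u := by
    rw [Fintype.linearIndependent_iff]
    intro g hg
    set aco : Finset X → ℚ := fun S' => if h : S' ∈ P then g (Sum.inl ⟨S', h⟩) else 0 with haco
    set bco : Finset X → ℚ := fun S' => if h : S' ∈ P then g (Sum.inr ⟨S', h⟩) else 0 with hbco
    set pf : B → ℚ := fun b => ∑ S ∈ P, aco S * vv S b with hpf
    set qf : B → ℚ := fun b => ∑ S ∈ P, bco S * ww S b with hqf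
    have hzero : ∀ b : B, pf b + qf b = 0 := by
      intro b
      have h0 := congrFun hg b
      rw [Finset.sum_apply] at h0
      simp only [Pi.smul_apply, smul_eq_mul, Pi.zero_apply] at h0
      rw [Fintype.sum_sum_type] at h0
      have ea : ∑ i : ↥P, g (Sum.inl i) * u (Sum.inl i) b = pf b := by
        show _ = ∑ S ∈ P, aco S * vv S b
        rw [← Finset.sum_coe_sort P (fun S => aco S * vv S b)]
        refine Finset.sum_congr rfl fun i _ => ?_
        rw [haco]
        simp [hu]
      have eb : ∑ i : ↥P, g (Sum.inr i) * u (Sum.inr i) b = qf b := by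
        show _ = ∑ S ∈ P, bco S * ww S b
        rw [← Finset.sum_coe_sort P (fun S => bco S * ww S b)]
        refine Finset.sum_congr rfl fun i _ => ?_
        rw [hbco]
        simp [hu]
      rw [ea, eb] at h0
      exact h0
    -- cross term vanishes
    have hcross : ∑ b : B, pf b * qf b = 0 := by
      show ∑ b : B, (∑ S ∈ P, aco S * vv S b) * (∑ T ∈ P, bco T * ww T b) = 0
      rw [swap3]
      apply Finset.sum_eq_zero
      intro S _
      apply Finset.sum_eq_zero
      intro T _
      have : ∑ b : B, (aco S * vv S b) * (bco T * ww T b)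
          = aco S * bco T * ∑ b : B, vv S b * ww T b := by
        rw [Finset.mul_sum]
        exact Finset.sum_congr rfl fun b _ => by ring
      rw [this, gcross S T, mul_zero]
    -- each part has zero square sum
    have hppqq : ∀ b : B, pf b * pf b = - (pf b * qf b) ∧ qf b * qf b = - (pf b * qf b) := by
      intro b
      have h : pf b = - qf b := by linarith [hzero b]
      constructor <;> (rw [h]; ring)
    have hpp : ∑ b : B, pf b * pf b = 0 := by
      calc ∑ b : B, pf b * pf b = ∑ b : B, - (pf b * qf b) :=
            Finset.sum_congr rfl fun b _ => (hppqq b).1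
        _ = - ∑ b : B, pf b * qf b := by rw [Finset.sum_neg_distrib]
        _ = 0 := by rw [hcross, neg_zero]
    have hqq : ∑ b : B, qf b * qf b = 0 := by
      calc ∑ b : B, qf b * qf b = ∑ b : B, - (pf b * qf b) :=
            Finset.sum_congr rfl fun b _ => (hppqq b).2
        _ = - ∑ b : B, pf b * qf b := by rw [Finset.sum_neg_distrib]
        _ = 0 := by rw [hcross, neg_zero]
    -- Gram expansion of the squares
    have hp2 : ∑ b : B, pf b * pf b
        = ∑ S ∈ P, ∑ T ∈ P, aco S * aco T * ((f (2 * s + 1 - (S ∩ T).card) 0 : ℕ) : ℚ) := by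
      show ∑ b : B, (∑ S ∈ P, aco S * vv S b) * (∑ T ∈ P, aco T * vv T b) = _
      rw [swap3]
      refine Finset.sum_congr rfl fun S hS => Finset.sum_congr rfl fun T hT => ?_
      rw [← gv S hS T hT, Finset.mul_sum]
      exact Finset.sum_congr rfl fun b _ => by ring
    have hq2 : ∑ b : B, qf b * qf b
        = ∑ S ∈ P, ∑ T ∈ P, bco S * bco T * ((f (2 * s - (S ∩ T).card) 1 : ℕ) : ℚ) := by
      show ∑ b : B, (∑ S ∈ P, bco S * ww S b) * (∑ T ∈ P, bco T * ww T b) = _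
      rw [swap3]
      refine Finset.sum_congr rfl fun S hS => Finset.sum_congr rfl fun T hT => ?_
      rw [← gw S hS T hT, Finset.mul_sum]
      exact Finset.sum_congr rfl fun b _ => by ring
    -- apply the Gram bound
    have hb₁ := gram_bound Y s (fun j => f (2 * s + 1 - j) (0 + j))
      (fun mm => f (2 * s + 1 - mm) 0) hg₁ aco
    have hb₂ := gram_bound Y s (fun j => f (2 * s - j) (1 + j))
      (fun mm => f (2 * s - mm) 1) hg₂ bco
    have hsum_a : ∑ S ∈ P, (aco S) ^ 2 = 0 := by
      have h1 : ((f (2 * s + 1 - s) (0 + s) : ℕ) : ℚ) * ∑ S ∈ P, (aco S) ^ 2 ≤ 0 := by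
        rw [hPdef]
        calc ((f (2 * s + 1 - s) (0 + s) : ℕ) : ℚ)
              * ∑ S ∈ Y.powersetCard s, (aco S) ^ 2
            ≤ ∑ S ∈ Y.powersetCard s, ∑ T ∈ Y.powersetCard s,
                aco S * aco T * ((f (2 * s + 1 - (S ∩ T).card) 0 : ℕ) : ℚ) := hb₁
          _ = ∑ b : B, pf b * pf b := by rw [hp2, hPdef]
          _ = 0 := hpp
      have h2 : (0 : ℚ) < ((f (2 * s + 1 - s) (0 + s) : ℕ) : ℚ) := by exact_mod_cast hd₁
      have h3 : (0 : ℚ) ≤ ∑ S ∈ P, (aco S) ^ 2 :=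
        Finset.sum_nonneg fun S _ => sq_nonneg _
      nlinarith
    have hsum_b : ∑ S ∈ P, (bco S) ^ 2 = 0 := by
      have h1 : ((f (2 * s - s) (1 + s) : ℕ) : ℚ) * ∑ S ∈ P, (bco S) ^ 2 ≤ 0 := by
        rw [hPdef]
        calc ((f (2 * s - s) (1 + s) : ℕ) : ℚ)
              * ∑ S ∈ Y.powersetCard s, (bco S) ^ 2
            ≤ ∑ S ∈ Y.powersetCard s, ∑ T ∈ Y.powersetCard s,
                bco S * bco T * ((f (2 * s - (S ∩ T).card) 1 : ℕ) : ℚ) := hb₂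
          _ = ∑ b : B, qf b * qf b := by rw [hq2, hPdef]
          _ = 0 := hqq
      have h2 : (0 : ℚ) < ((f (2 * s - s) (1 + s) : ℕ) : ℚ) := by exact_mod_cast hd₂
      have h3 : (0 : ℚ) ≤ ∑ S ∈ P, (bco S) ^ 2 :=
        Finset.sum_nonneg fun S _ => sq_nonneg _
      nlinarith
    have haz : ∀ S ∈ P, aco S = 0 := by
      intro S hS
      have := (Finset.sum_eq_zero_iff_of_nonneg fun S (_ : S ∈ P) => sq_nonneg (aco S)).mp
        hsum_a S hS
      exact sq_eq_zero_iff.mp this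
    have hbz : ∀ S ∈ P, bco S = 0 := by
      intro S hS
      have := (Finset.sum_eq_zero_iff_of_nonneg fun S (_ : S ∈ P) => sq_nonneg (bco S)).mp
        hsum_b S hS
      exact sq_eq_zero_iff.mp this
    intro i
    rcases i with S | S
    · have := haz ↑S S.2
      rw [haco] at this
      simpa [dif_pos S.2] using this
    · have := hbz ↑S S.2
      rw [hbco] at this
      simpa [dif_pos S.2] using this
  -- conclusion by dimension counting
  have hle : Fintype.card (↥P ⊕ ↥P) ≤ Fintype.card B := by
    have h1 := hind.fintype_card_le_finrank
    rwa [Module.finrank_pi] at h1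
  have hcount : Fintype.card (↥P ⊕ ↥P) = 2 * (v - 1).choose s := by
    rw [Fintype.card_sum, Fintype.card_coe, hPdef, Finset.card_powersetCard, hYcard]
    ring
  omega
end

section
/- If D is a non-trivial t-(v,k,λ) design with t ≥ 2 and G ≤ Aut(D) acts transitively on the blocks of D, then G acts transitively on the points of D (Block's Lemma). -/
open Finset

lemma count_supersets {α : Type*} [DecidableEq α] (U S : Finset α) (hSU : S ⊆ U)
    {n : ℕ} (hn : S.card ≤ n) :
    ((U.powersetCard n).filter (fun T => S ⊆ T)).card
      = (U.card - S.card).choose (n - S.card) := by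
  rw [← card_sdiff_of_subset hSU, ← card_powersetCard (n - S.card) (U \ S)]
  apply Finset.card_bij (fun T _ => T \ S)
  · intro T hT
    simp only [mem_filter, mem_powersetCard] at hT ⊢
    exact ⟨sdiff_subset_sdiff hT.1.1 le_rfl, by rw [card_sdiff_of_subset hT.2, hT.1.2]⟩
  · intro T hT T' hT' h
    simp only [mem_filter, mem_powersetCard] at hT hT'
    have : T \ S ∪ S = T' \ S ∪ S := by rw [h]
    rwa [sdiff_union_of_subset hT.2, sdiff_union_of_subset hT'.2] at this
  · intro T hT
    simp only [mem_powersetCard] at hT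
    refine ⟨T ∪ S, ?_, ?_⟩
    · simp only [mem_filter, mem_powersetCard]
      refine ⟨⟨union_subset (hT.1.trans sdiff_subset) hSU, ?_⟩, subset_union_right⟩
      rw [card_union_of_disjoint (Finset.sdiff_disjoint.mono_left hT.1), hT.2]
      omega
    · rw [union_sdiff_right, sdiff_eq_self_of_disjoint (Finset.sdiff_disjoint.mono_left hT.1)]

lemma pair_count {X B : Type*} [Fintype X] [Fintype B] (I : X → B → Prop)
    [∀ x b, Decidable (I x b)] {t v k l : ℕ}
    (hcardX : Fintype.card X = v)
    (hblk : ∀ b : B, (Finset.univ.filter fun x => I x b).card = k)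
    (hdes : ∀ S : Finset X, S.card = t →
      (Finset.univ.filter fun b : B => ∀ x ∈ S, I x b).card = l)
    (ht : 2 ≤ t) {a c : X} (hac : a ≠ c) :
    (Finset.univ.filter fun b => I a b ∧ I c b).card * (k-2).choose (t-2)
      = l * (v-2).choose (t-2) := by
  classical
  set S : Finset X := {a, c} with hSdef
  have hS : S.card = 2 := card_pair hac
  set A : Finset (Finset X) := ((univ : Finset X).powersetCard t).filter (fun T => S ⊆ T)
    with hAdef
  have hAcard : A.card = (v-2).choose (t-2) := by
    rw [hAdef, count_supersets univ S (subset_univ S) (by omega), hS, card_univ, hcardX]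
  have key : ∑ T ∈ A, (Finset.univ.filter fun b : B => ∀ x ∈ T, I x b).card
      = A.card * l := by
    rw [Finset.sum_congr rfl (fun T hT => ?_), sum_const, smul_eq_mul]
    have := hdes T (mem_powersetCard.1 (mem_filter.1 hT).1).2
    convert this using 2
    congr!
  have key2 : ∑ T ∈ A, (Finset.univ.filter fun b : B => ∀ x ∈ T, I x b).card
      = (Finset.univ.filter fun b => I a b ∧ I c b).card * (k-2).choose (t-2) := by
    have step1 : ∀ T ∈ A, (Finset.univ.filter fun b : B => ∀ x ∈ T, I x b).card
        = ∑ b : B, if (∀ x ∈ T, I x b) then 1 else 0 := fun T _ => card_filter _ _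
    rw [Finset.sum_congr rfl step1, Finset.sum_comm]
    have inner : ∀ b : B, (∑ T ∈ A, if (∀ x ∈ T, I x b) then 1 else 0)
        = if I a b ∧ I c b then (k-2).choose (t-2) else 0 := by
      intro b
      rw [← card_filter]
      by_cases hb : I a b ∧ I c b
      · rw [if_pos hb]
        have hSb : S ⊆ (Finset.univ.filter fun x => I x b) := by
          intro z hz
          simp only [hSdef, mem_insert, mem_singleton] at hz
          rcases hz with rfl | rfl <;> simp [hb.1, hb.2]
        have heq : A.filter (fun T => ∀ x ∈ T, I x b)
            = ((Finset.univ.filter fun x => I x b).powersetCard t).filter (fun T => S ⊆ T) := by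
          ext T
          simp only [hAdef, mem_filter, mem_powersetCard, subset_univ, true_and]
          constructor
          · rintro ⟨⟨hTt, hST⟩, hTb⟩
            exact ⟨⟨fun z hz => mem_filter.2 ⟨mem_univ z, hTb z hz⟩, hTt⟩, hST⟩
          · rintro ⟨⟨hTb, hTt⟩, hST⟩
            exact ⟨⟨hTt, hST⟩, fun z hz => (mem_filter.1 (hTb hz)).2⟩
        rw [heq, count_supersets _ S hSb (by omega), hS, hblk b]
      · rw [if_neg hb]
        rw [Finset.card_eq_zero, Finset.filter_eq_empty_iff]
        intro T hT
        simp only [hAdef, mem_filter, mem_powersetCard] at hT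
        intro hall
        exact hb ⟨hall a (hT.2 (by simp [hSdef])), hall c (hT.2 (by simp [hSdef]))⟩
    rw [Finset.sum_congr rfl (fun b _ => inner b), ← sum_filter, sum_const, smul_eq_mul]
  rw [← key2, key, hAcard, mul_comm]

set_option maxHeartbeats 1000000 in
/-- Block's Lemma: if G acts on a non-trivial t-(v,k,λ) design (t ≥ 2) by
automorphisms (incidence-preserving actions on points and blocks) and is
transitive on blocks, then it is transitive on points. -/
theorem stmt13 {X B : Type*} [Fintype X] [Fintype B] (I : X → B → Prop)
    [∀ x b, Decidable (I x b)] {t v k l : ℕ} (hD : IsDesign X B I t v k l)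
    (ht : 2 ≤ t) (hk : t < k) (hv : k < v)
    (G : Type*) [Group G] [MulAction G X] [MulAction G B]
    (hinc : ∀ (g : G) (x : X) (b : B), I x b ↔ I (g • x) (g • b))
    (hbt : MulAction.IsPretransitive G B) :
    MulAction.IsPretransitive G X := by
  classical
  obtain ⟨ht0, htk, hkv, hl, hcardX, hblk, hdes⟩ := hD
  by_contra hnt
  rw [show (MulAction.IsPretransitive G X) ↔ ∀ x y : X, ∃ g : G, g • x = y from
    ⟨fun h => h.exists_smul_eq, fun h => ⟨h⟩⟩] at hnt
  push_neg at hnt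
  obtain ⟨x, y, hxy⟩ := hnt
  have hxyne : x ≠ y := by
    intro h; exact hxy 1 (by rw [one_smul, h])
  -- constants
  have hc2 : 0 < (k-2).choose (t-2) := Nat.choose_pos (by omega)
  have hm2 : 0 < (v-2).choose (t-2) := Nat.choose_pos (by omega)
  have hpair : ∀ a c : X, a ≠ c →
      (Finset.univ.filter fun b => I a b ∧ I c b).card * (k-2).choose (t-2)
        = l * (v-2).choose (t-2) :=
    fun a c hac => pair_count I hcardX hblk hdes ht hac
  set lam := (Finset.univ.filter fun b => I x b ∧ I y b).card with hlamdef
  have hlam : ∀ a c : X, a ≠ c →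
      (Finset.univ.filter fun b => I a b ∧ I c b).card = lam := fun a c hac =>
    Nat.eq_of_mul_eq_mul_right hc2 ((hpair a c hac).trans (hpair x y hxyne).symm)
  have hlampos : 0 < lam := by
    have := hpair x y hxyne
    rw [← hlamdef] at this
    by_contra h
    push_neg at h
    interval_cases lam
    · simp at this
      omega
  -- r-count : every point lies in the same "r" blocks, r*(k-1) = (v-1)*lam
  have hk1 : 1 ≤ k := by omega
  have hv1 : 1 ≤ v := by omega
  have L1 : ∀ a : X, (Finset.univ.filter fun b => I a b).card * (k-1) = (v-1) * lam := by
    intro a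
    have lhs : ∑ c ∈ univ.filter (fun c => c ≠ a),
        (Finset.univ.filter fun b => I a b ∧ I c b).card = (v-1) * lam := by
      rw [Finset.sum_congr rfl (fun c hc => hlam a c (Ne.symm (mem_filter.1 hc).2)),
        sum_const, smul_eq_mul, filter_ne', card_erase_of_mem (mem_univ a), card_univ, hcardX]
    have rhs : ∑ c ∈ univ.filter (fun c => c ≠ a),
        (Finset.univ.filter fun b => I a b ∧ I c b).card
        = (Finset.univ.filter fun b => I a b).card * (k-1) := by
      rw [Finset.sum_congr rfl (fun c _ => card_filter _ _), Finset.sum_comm]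
      have inner : ∀ b : B, (∑ c ∈ univ.filter (fun c => c ≠ a),
          if I a b ∧ I c b then 1 else 0) = if I a b then k-1 else 0 := by
        intro b
        by_cases hab : I a b
        · rw [if_pos hab]
          simp only [hab, true_and]
          rw [← card_filter, filter_filter]
          have : (univ.filter fun c => c ≠ a ∧ I c b)
              = (univ.filter fun x => I x b).erase a := by
            ext z; simp [mem_erase, and_comm]
          rw [this, card_erase_of_mem (mem_filter.2 ⟨mem_univ a, hab⟩), hblk b]
        · rw [if_neg hab]
          simp [hab]
      rw [Finset.sum_congr rfl (fun b _ => inner b), ← sum_filter, sum_const, smul_eq_mul]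
    rw [← rhs, lhs]
  -- orbit sets
  set Δ : Finset X := univ.filter (fun z => z ∈ MulAction.orbit G x) with hDdef
  set Cs : Finset X := univ.filter (fun z => z ∉ MulAction.orbit G x) with hCdef
  have hxD : x ∈ Δ := mem_filter.2 ⟨mem_univ x, MulAction.mem_orbit_self x⟩
  have hyC : y ∈ Cs := mem_filter.2 ⟨mem_univ y, fun h => by
    obtain ⟨g, hg⟩ := MulAction.mem_orbit_iff.1 h; exact hxy g hg⟩
  have hDC : Δ.card + Cs.card = v := by
    rw [hDdef, hCdef, card_filter_add_card_filter_not, card_univ, hcardX]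
  have hDCne : ∀ a ∈ Δ, ∀ c ∈ Cs, a ≠ c := by
    intro a ha c hc h
    subst h
    exact (mem_filter.1 hc).2 (mem_filter.1 ha).2
  -- constancy of block intersection with invariant sets
  have key : ∀ (p : X → Prop) (_ : DecidablePred p), (∀ (g : G) (a : X), p a → p (g • a)) →
      ∀ b b' : B, ((univ.filter p).filter fun a => I a b).card
        = ((univ.filter p).filter fun a => I a b').card := by
    intro p hdec hp b b'
    obtain ⟨g, hg⟩ := hbt.exists_smul_eq b b'
    apply Finset.card_bij (fun a _ => g • a)
    · intro a ha
      simp only [mem_filter, mem_univ, true_and] at ha ⊢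
      exact ⟨hp g a ha.1, by rw [← hg]; exact (hinc g a b).1 ha.2⟩
    · intro a _ a' _ h
      exact MulAction.injective g h
    · intro c hc
      simp only [mem_filter, mem_univ, true_and] at hc
      refine ⟨g⁻¹ • c, ?_, by rw [smul_inv_smul]⟩
      simp only [mem_filter, mem_univ, true_and]
      refine ⟨hp g⁻¹ c hc.1, ?_⟩
      have h2 := (hinc g (g⁻¹ • c) b)
      rw [smul_inv_smul, hg] at h2
      exact h2.2 hc.2
  have hporb : ∀ (g : G) (a : X), a ∈ MulAction.orbit G x → g • a ∈ MulAction.orbit G x := by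
    intro g a ha
    obtain ⟨h, hh⟩ := MulAction.mem_orbit_iff.1 ha
    exact MulAction.mem_orbit_iff.2 ⟨g * h, by rw [mul_smul, hh]⟩
  have hdconst : ∀ b b' : B, (Δ.filter fun a => I a b).card
      = (Δ.filter fun a => I a b').card := by
    have := key (fun z => z ∈ MulAction.orbit G x) (by infer_instance) hporb
    rw [← hDdef] at this
    exact this
  have heconst : ∀ b b' : B, (Cs.filter fun a => I a b).card
      = (Cs.filter fun a => I a b').card := by
    have := key (fun z => z ∉ MulAction.orbit G x) (by infer_instance) (by
      intro g a ha hmem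
      have := hporb g⁻¹ (g • a) hmem
      rw [inv_smul_smul] at this
      exact ha this)
    rw [← hCdef] at this
    exact this
  -- a block exists
  obtain ⟨T, -, hT⟩ := Finset.exists_subset_card_eq
    (show t ≤ (univ : Finset X).card by rw [card_univ, hcardX]; omega)
  have hbpos := hl
  rw [← hdes T hT] at hbpos
  obtain ⟨b₀, -⟩ := Finset.card_pos.1 hbpos
  set n := (univ : Finset B).card with hndef
  set d := (Δ.filter fun a => I a b₀).card with hddef
  set e := (Cs.filter fun a => I a b₀).card with hedef
  -- d + e = k
  have hde : d + e = k := by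
    have h1 : Δ.filter (fun a => I a b₀)
        = (univ.filter fun z => I z b₀).filter (fun a => a ∈ MulAction.orbit G x) := by
      rw [hDdef, filter_filter, filter_filter]; ext z; simp [and_comm]
    have h2 : Cs.filter (fun a => I a b₀)
        = (univ.filter fun z => I z b₀).filter (fun a => ¬ a ∈ MulAction.orbit G x) := by
      rw [hCdef, filter_filter, filter_filter]; ext z; simp [and_comm]
    rw [hddef, hedef, h1, h2, card_filter_add_card_filter_not]
    exact hblk b₀
  -- flag counts
  have flag : ∀ (W : Finset X) (w : ℕ),
      (∀ b b' : B, (W.filter fun a => I a b).card = (W.filter fun a => I a b').card) →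
      (W.filter fun a => I a b₀).card = w →
      ∑ a ∈ W, (univ.filter fun b : B => I a b).card = n * w := by
    intro W w hconst hw
    calc ∑ a ∈ W, (univ.filter fun b : B => I a b).card
        = ∑ a ∈ W, ∑ b : B, (if I a b then 1 else 0) :=
          Finset.sum_congr rfl (fun a _ => card_filter _ _)
      _ = ∑ b : B, ∑ a ∈ W, (if I a b then 1 else 0) := Finset.sum_comm
      _ = ∑ b : B, (W.filter fun a => I a b).card :=
          Finset.sum_congr rfl (fun b _ => (card_filter _ _).symm)
      _ = ∑ _b : B, w := Finset.sum_congr rfl (fun b _ => (hconst b b₀).trans hw)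
      _ = n * w := by rw [sum_const, smul_eq_mul]
  have H1 : n * d * (k-1) = Δ.card * ((v-1) * lam) := by
    calc n * d * (k-1)
        = (∑ a ∈ Δ, (univ.filter fun b : B => I a b).card) * (k-1) := by
          rw [flag Δ d hdconst rfl]
      _ = ∑ a ∈ Δ, (univ.filter fun b : B => I a b).card * (k-1) := by rw [Finset.sum_mul]
      _ = ∑ _a ∈ Δ, (v-1) * lam := Finset.sum_congr rfl (fun a _ => L1 a)
      _ = Δ.card * ((v-1) * lam) := by rw [sum_const, smul_eq_mul]
  have H2 : n * e * (k-1) = Cs.card * ((v-1) * lam) := by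
    calc n * e * (k-1)
        = (∑ a ∈ Cs, (univ.filter fun b : B => I a b).card) * (k-1) := by
          rw [flag Cs e heconst rfl]
      _ = ∑ a ∈ Cs, (univ.filter fun b : B => I a b).card * (k-1) := by rw [Finset.sum_mul]
      _ = ∑ _a ∈ Cs, (v-1) * lam := Finset.sum_congr rfl (fun a _ => L1 a)
      _ = Cs.card * ((v-1) * lam) := by rw [sum_const, smul_eq_mul]
  -- cross count
  have H3 : Δ.card * Cs.card * lam = n * (d * e) := by
    have lhs : ∑ a ∈ Δ, ∑ c ∈ Cs, (univ.filter fun b : B => I a b ∧ I c b).card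
        = Δ.card * Cs.card * lam := by
      rw [Finset.sum_congr rfl (fun a ha => Finset.sum_congr rfl
        (fun c hc => hlam a c (hDCne a ha c hc)))]
      simp [sum_const, smul_eq_mul, mul_assoc]
    have rhs : ∑ a ∈ Δ, ∑ c ∈ Cs, (univ.filter fun b : B => I a b ∧ I c b).card
        = n * (d * e) := by
      calc ∑ a ∈ Δ, ∑ c ∈ Cs, (univ.filter fun b : B => I a b ∧ I c b).card
          = ∑ a ∈ Δ, ∑ c ∈ Cs, ∑ b : B, (if I a b ∧ I c b then 1 else 0) :=
            Finset.sum_congr rfl (fun a _ => Finset.sum_congr rfl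
              (fun c _ => card_filter _ _))
        _ = ∑ a ∈ Δ, ∑ b : B, ∑ c ∈ Cs, (if I a b ∧ I c b then 1 else 0) :=
            Finset.sum_congr rfl (fun a _ => Finset.sum_comm)
        _ = ∑ b : B, ∑ a ∈ Δ, ∑ c ∈ Cs, (if I a b ∧ I c b then 1 else 0) :=
            Finset.sum_comm
        _ = ∑ b : B, (Δ.filter fun a => I a b).card * (Cs.filter fun c => I c b).card := by
            refine Finset.sum_congr rfl (fun b _ => ?_)
            rw [card_filter, card_filter, Finset.sum_mul_sum]
            exact Finset.sum_congr rfl (fun a _ => Finset.sum_congr rfl (fun c _ => by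
              by_cases h1 : I a b <;> by_cases h2 : I c b <;> simp [h1, h2]))
        _ = ∑ _b : B, d * e := Finset.sum_congr rfl (fun b _ => by
            rw [hdconst b b₀, heconst b b₀])
        _ = n * (d * e) := by rw [sum_const, smul_eq_mul]
    rw [← lhs, rhs]
  -- final arithmetic
  have hApos : 0 < Δ.card := card_pos.2 ⟨x, hxD⟩
  have hCpos : 0 < Cs.card := card_pos.2 ⟨y, hyC⟩
  have key1 : Cs.card * (k-1) = (v-1) * e := by
    apply Nat.eq_of_mul_eq_mul_left (Nat.mul_pos hApos hlampos)
    calc (Δ.card * lam) * (Cs.card * (k-1)) = (Δ.card * Cs.card * lam) * (k-1) := by ring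
      _ = (n * (d*e)) * (k-1) := by rw [H3]
      _ = (n * d * (k-1)) * e := by ring
      _ = (Δ.card * ((v-1) * lam)) * e := by rw [H1]
      _ = (Δ.card * lam) * ((v-1) * e) := by ring
  have key2 : Δ.card * (k-1) = (v-1) * d := by
    apply Nat.eq_of_mul_eq_mul_left (Nat.mul_pos hCpos hlampos)
    calc (Cs.card * lam) * (Δ.card * (k-1)) = (Δ.card * Cs.card * lam) * (k-1) := by ring
      _ = (n * (d*e)) * (k-1) := by rw [H3]
      _ = (n * e * (k-1)) * d := by ring
      _ = (Cs.card * ((v-1) * lam)) * d := by rw [H2]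
      _ = (Cs.card * lam) * ((v-1) * d) := by ring
  have hfin : v * (k-1) = (v-1) * k := by
    calc v * (k-1) = (Δ.card + Cs.card) * (k-1) := by rw [hDC]
      _ = Δ.card * (k-1) + Cs.card * (k-1) := add_mul _ _ _
      _ = (v-1) * d + (v-1) * e := by rw [key1, key2]
      _ = (v-1) * (d + e) := (mul_add _ _ _).symm
      _ = (v-1) * k := by rw [hde]
  zify [hk1, hv1] at hfin
  have hvk : (v : ℤ) = k := by ring_nf at hfin; linarith
  have : v = k := by exact_mod_cast hvk
  omega
end

section
/- If D is a non-trivial t-(v,k,λ) design with t ≥ 3 and G ≤ Aut(D) acts transitively on the flags of D, then G acts 2-transitively on the points of D. -/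
open Finset

lemma cnt_eq {β : Type*} [Fintype β] (p : β → Prop) [DecidablePred p] :
    Nat.card {b // p b} = (Finset.univ.filter p).card := by
  rw [Nat.card_eq_fintype_card, Fintype.card_subtype]

lemma dc' {α β : Type*} (A : Finset α) (Bs : Finset β) (R : α → β → Prop)
    [∀ a b, Decidable (R a b)] :
    ∑ a ∈ A, (Bs.filter fun b => R a b).card = ∑ b ∈ Bs, (A.filter fun a => R a b).card := by
  simp_rw [Finset.card_filter]
  exact Finset.sum_comm

lemma prod_count {α β : Type*} (A : Finset α) (S T : Finset β) (R : β → α → Prop)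
    [∀ x a, Decidable (R x a)] :
    ∑ a ∈ A, (S.filter fun x => R x a).card * (T.filter fun y => R y a).card
      = ∑ x ∈ S, ∑ y ∈ T, (A.filter fun a => R x a ∧ R y a).card := by
  simp_rw [Finset.card_filter]
  calc ∑ a ∈ A, (∑ x ∈ S, if R x a then 1 else 0) * (∑ y ∈ T, if R y a then 1 else 0)
      = ∑ a ∈ A, ∑ x ∈ S, ∑ y ∈ T, (if R x a then 1 else 0) * (if R y a then 1 else 0) := by
        refine Finset.sum_congr rfl fun a _ => ?_
        rw [Finset.sum_mul_sum]
    _ = ∑ x ∈ S, ∑ a ∈ A, ∑ y ∈ T, (if R x a then 1 else 0) * (if R y a then 1 else 0) :=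
        Finset.sum_comm
    _ = ∑ x ∈ S, ∑ y ∈ T, ∑ a ∈ A, (if R x a then 1 else 0) * (if R y a then 1 else 0) :=
        Finset.sum_congr rfl fun x _ => Finset.sum_comm
    _ = ∑ x ∈ S, ∑ y ∈ T, ∑ a ∈ A, (if R x a ∧ R y a then 1 else 0) := by
        refine Finset.sum_congr rfl fun x _ => Finset.sum_congr rfl fun y _ =>
          Finset.sum_congr rfl fun a _ => ?_
        by_cases h1 : R x a <;> by_cases h2 : R y a <;> simp [h1, h2]

lemma step_down {X B : Type*} [Fintype X] [Fintype B] (I : X → B → Prop)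
    {v k s μ : ℕ}
    (hv : Fintype.card X = v) (hkbN : ∀ b : B, Nat.card {x : X // I x b} = k)
    (h : ∀ S : Finset X, S.card = s + 1 → Nat.card {b : B // ∀ x ∈ S, I x b} = μ) :
    ∀ S : Finset X, S.card = s →
      (k - s) * Nat.card {b : B // ∀ x ∈ S, I x b} = (v - s) * μ := by
  classical
  simp only [cnt_eq] at h ⊢
  have hkb : ∀ b : B, (Finset.univ.filter fun x => I x b).card = k := by
    intro b
    rw [← cnt_eq]
    exact hkbN b
  intro S hS
  have key := dc' (univ \ S) (univ : Finset B) (fun z b => (∀ x ∈ S, I x b) ∧ I z b)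
  have hL : ∑ z ∈ univ \ S, ((univ : Finset B).filter fun b => (∀ x ∈ S, I x b) ∧ I z b).card
      = (v - s) * μ := by
    rw [Finset.sum_congr rfl (fun z hz => ?_), Finset.sum_const, smul_eq_mul]
    · rw [Finset.card_sdiff_of_subset (Finset.subset_univ S), Finset.card_univ, hv, hS]
    · have hzS : z ∉ S := (Finset.mem_sdiff.mp hz).2
      have : ((univ : Finset B).filter fun b => (∀ x ∈ S, I x b) ∧ I z b)
          = (univ.filter fun b => ∀ x ∈ insert z S, I x b) := by
        apply Finset.filter_congr
        intro b _
        simp [Finset.forall_mem_insert, and_comm]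
      rw [this, h _ (by rw [Finset.card_insert_of_notMem hzS, hS])]
  have hR : ∑ b ∈ (univ : Finset B), ((univ \ S).filter fun z => (∀ x ∈ S, I x b) ∧ I z b).card
      = (univ.filter fun b : B => ∀ x ∈ S, I x b).card * (k - s) := by
    have hper : ∀ b ∈ (univ : Finset B),
        ((univ \ S).filter fun z => (∀ x ∈ S, I x b) ∧ I z b).card
          = if (∀ x ∈ S, I x b) then k - s else 0 := by
      intro b _
      by_cases hb : ∀ x ∈ S, I x b
      · rw [if_pos hb]
        have hset : ((univ \ S).filter fun z => (∀ x ∈ S, I x b) ∧ I z b)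
            = (univ.filter fun z => I z b) \ S := by
          ext z
          simp only [Finset.mem_filter, Finset.mem_sdiff, Finset.mem_univ, true_and]
          tauto
        rw [hset, Finset.card_sdiff_of_subset (fun z hz => by
          simp only [Finset.mem_filter, Finset.mem_univ, true_and]; exact hb z hz),
          hkb b, hS]
      · rw [if_neg hb]
        rw [Finset.card_eq_zero, Finset.filter_eq_empty_iff]
        intro z _
        tauto
    rw [Finset.sum_congr rfl hper, ← Finset.sum_filter, Finset.sum_const, smul_eq_mul]
  rw [hL, hR] at key
  rw [mul_comm]
  exact key.symm

lemma const_count {X B : Type*} [Fintype X] [Fintype B] (I : X → B → Prop)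
    {t v k l : ℕ}
    (hv : Fintype.card X = v) (hkb : ∀ b : B, Nat.card {x : X // I x b} = k)
    (htk : t ≤ k) (hkv : k ≤ v) (hl : 0 < l)
    (hdes : ∀ S : Finset X, S.card = t → Nat.card {b : B // ∀ x ∈ S, I x b} = l) :
    ∀ j, j ≤ t → ∃ μ, 0 < μ ∧ ∀ S : Finset X, S.card = t - j →
      Nat.card {b : B // ∀ x ∈ S, I x b} = μ := by
  intro j
  induction j with
  | zero => exact fun _ => ⟨l, hl, by simpa using hdes⟩
  | succ j ih =>
    intro hj
    obtain ⟨μ, hμ, hconst⟩ := ih (Nat.le_of_succ_le hj)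
    set s := t - (j + 1) with hs
    have hsk : s < k := lt_of_lt_of_le (by omega) htk
    have hsv : s < v := lt_of_lt_of_le hsk hkv
    have hs1 : s + 1 = t - j := by omega
    have hstep := step_down I hv hkb (μ := μ) (s := s)
      (fun S hS => hconst S (by omega))
    obtain ⟨S0, _, hS0⟩ := Finset.exists_subset_card_eq
      (show s ≤ (univ : Finset X).card by rw [Finset.card_univ, hv]; omega)
    refine ⟨Nat.card {b : B // ∀ x ∈ S0, I x b}, ?_, ?_⟩
    · have h0 := hstep S0 hS0
      have hpos : 0 < (v - s) * μ := Nat.mul_pos (by omega) hμ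
      by_contra hc
      push_neg at hc
      have hz : Nat.card {b : B // ∀ x ∈ S0, I x b} = 0 := Nat.le_zero.mp hc
      rw [hz, mul_zero] at h0
      omega
    · intro S hS
      have h1 := hstep S hS
      have h2 := hstep S0 hS0
      exact Nat.eq_of_mul_eq_mul_left (by omega) (h1.trans h2.symm)

lemma stab_trans {X B G : Type*} [Fintype X] [Fintype B] (I : X → B → Prop)
    [Group G] [MulAction G X] [MulAction G B]
    {μ2 μ3 k v : ℕ}
    (hμ2 : 0 < μ2) (hμ3 : 0 < μ3)
    (h2N : ∀ S : Finset X, S.card = 2 → Nat.card {b : B // ∀ x ∈ S, I x b} = μ2)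
    (h3N : ∀ S : Finset X, S.card = 3 → Nat.card {b : B // ∀ x ∈ S, I x b} = μ3)
    (hrel : (k - 2) * μ2 = (v - 2) * μ3) (hk2 : 2 < k) (hkv : k < v)
    (hinc : ∀ (g : G) (x : X) (b : B), I x b ↔ I (g • x) (g • b))
    (hft : ∀ (x : X) (b : B) (x' : X) (b' : B), I x b → I x' b' →
      ∃ g : G, g • x = x' ∧ g • b = b')
    (a p q : X) (hp : p ≠ a) (hq : q ≠ a) :
    ∃ g : G, g • a = a ∧ g • p = q := by
  classical
  have h2 : ∀ S : Finset X, S.card = 2 →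
      (Finset.univ.filter fun b : B => ∀ x ∈ S, I x b).card = μ2 := by
    intro S hS
    rw [← cnt_eq]
    exact h2N S hS
  have h3 : ∀ S : Finset X, S.card = 3 →
      (Finset.univ.filter fun b : B => ∀ x ∈ S, I x b).card = μ3 := by
    intro S hS
    rw [← cnt_eq]
    exact h3N S hS
  by_contra hno
  push_neg at hno
  -- every point ≠ a shares a block with a
  have exblock : ∀ w : X, w ≠ a → ∃ b : B, I a b ∧ I w b := by
    intro w hw
    have hcard : ({a, w} : Finset X).card = 2 := Finset.card_pair (Ne.symm hw)
    have hne : (Finset.univ.filter fun b : B => ∀ x ∈ ({a, w} : Finset X), I x b).Nonempty := by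
      rw [← Finset.card_pos, h2 _ hcard]; exact hμ2
    obtain ⟨b, hb⟩ := hne
    rw [Finset.mem_filter] at hb
    exact ⟨b, hb.2 a (by simp), hb.2 w (by simp)⟩
  obtain ⟨b0, hab0, _⟩ := exblock p hp
  set bs := Finset.univ.filter fun b : B => I a b with hbs
  have hb0 : b0 ∈ bs := by simp [hbs, hab0]
  have hr : 0 < bs.card := Finset.card_pos.mpr ⟨b0, hb0⟩
  set r := bs.card with hrdef
  -- orbits of the stabilizer of a
  set O : X → Finset X := fun w => Finset.univ.filter fun u => ∃ g : G, g • a = a ∧ g • w = u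
    with hOdef
  have memO : ∀ w, w ∈ O w := by
    intro w
    simp only [hOdef, Finset.mem_filter, Finset.mem_univ, true_and]
    exact ⟨1, one_smul _ _, one_smul _ _⟩
  have hclosed : ∀ (w u : X) (g : G), g • a = a → u ∈ O w → g • u ∈ O w := by
    intro w u g hg hu
    simp only [hOdef, Finset.mem_filter, Finset.mem_univ, true_and] at hu ⊢
    obtain ⟨h', h1, h2'⟩ := hu
    exact ⟨g * h', by rw [mul_smul, h1, hg], by rw [mul_smul, h2']⟩
  have haO : ∀ w, w ≠ a → a ∉ O w := by
    intro w hw hmem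
    simp only [hOdef, Finset.mem_filter, Finset.mem_univ, true_and] at hmem
    obtain ⟨g, hg1, hg2⟩ := hmem
    exact hw (MulAction.injective g (hg2.trans hg1.symm))
  have hdisj : ∀ u, u ∈ O p → u ∉ O q := by
    intro u hup huq
    simp only [hOdef, Finset.mem_filter, Finset.mem_univ, true_and] at hup huq
    obtain ⟨g, hg1, hg2⟩ := hup
    obtain ⟨h', hh1, hh2⟩ := huq
    exact hno (h'⁻¹ * g) (by rw [mul_smul, hg1, inv_smul_eq_iff, hh1])
      (by rw [mul_smul, hg2, inv_smul_eq_iff, hh2])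
  -- counting functions
  set n : Finset X → B → ℕ := fun Ow b => (Ow.filter fun u => I u b).card with hn
  have hconst : ∀ w : X, ∀ b ∈ bs, ∀ b' ∈ bs, n (O w) b = n (O w) b' := by
    intro w b hb b' hb'
    rw [hbs, Finset.mem_filter] at hb hb'
    obtain ⟨g, hga, hgb⟩ := hft a b a b' hb.2 hb'.2
    apply Finset.card_bij (fun u _ => g • u)
    · intro u hu
      rw [Finset.mem_filter] at hu ⊢
      refine ⟨hclosed w u g hga hu.1, ?_⟩
      rw [← hgb]
      exact (hinc g u b).mp hu.2
    · intro u1 _ u2 _ he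
      exact MulAction.injective g he
    · intro u hu
      rw [Finset.mem_filter] at hu
      refine ⟨g⁻¹ • u, Finset.mem_filter.mpr ⟨hclosed w u g⁻¹ (by rw [inv_smul_eq_iff, hga]) hu.1, ?_⟩, by rw [smul_inv_smul]⟩
      have : I (g • (g⁻¹ • u)) (g • b) := by rw [smul_inv_smul, hgb]; exact hu.2
      exact (hinc g _ b).mpr this
  -- pair and triple counts
  have pairct : ∀ u : X, u ≠ a → (bs.filter fun b => I u b).card = μ2 := by
    intro u hu
    have hset : bs.filter (fun b => I u b)
        = Finset.univ.filter fun b : B => ∀ x ∈ ({a, u} : Finset X), I x b := by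
      ext b
      simp only [hbs, Finset.mem_filter, Finset.mem_univ, true_and, Finset.mem_insert,
        Finset.mem_singleton, and_assoc]
      constructor
      · rintro ⟨h1, h2⟩ x hx
        rcases hx with rfl | rfl
        · exact h1
        · exact h2
      · intro h
        exact ⟨h a (Or.inl rfl), h u (Or.inr rfl)⟩
    rw [hset, h2 _ (Finset.card_pair (Ne.symm hu))]
  have triplect : ∀ u w : X, u ≠ a → w ≠ a → u ≠ w →
      (bs.filter fun b => I u b ∧ I w b).card = μ3 := by
    intro u w hu hw huw
    have hset : bs.filter (fun b => I u b ∧ I w b)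
        = Finset.univ.filter fun b : B => ∀ x ∈ ({a, u, w} : Finset X), I x b := by
      ext b
      simp only [hbs, Finset.mem_filter, Finset.mem_univ, true_and, Finset.mem_insert,
        Finset.mem_singleton]
      constructor
      · rintro ⟨h1, h2, h3'⟩ x hx
        rcases hx with rfl | rfl | rfl
        · exact h1
        · exact h2
        · exact h3'
      · intro h
        exact ⟨h a (Or.inl rfl), h u (Or.inr (Or.inl rfl)), h w (Or.inr (Or.inr rfl))⟩
    have hcard : ({a, u, w} : Finset X).card = 3 := by
      rw [Finset.card_insert_of_notMem (by simp [Ne.symm hu, Ne.symm hw]),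
        Finset.card_pair huw]
    rw [hset, h3 _ hcard]
  set d1 := (O p).card with hd1def
  set d2 := (O q).card with hd2def
  have hd1 : 0 < d1 := Finset.card_pos.mpr ⟨p, memO p⟩
  have hd2 : 0 < d2 := Finset.card_pos.mpr ⟨q, memO q⟩
  set c1 := n (O p) b0 with hc1def
  set c2 := n (O q) b0 with hc2def
  have neOp : ∀ u ∈ O p, u ≠ a := fun u hu he => haO p hp (he ▸ hu)
  have neOq : ∀ u ∈ O q, u ≠ a := fun u hu he => haO q hq (he ▸ hu)
  -- eq1 : r * c1 = d1 * μ2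
  have eq1 : r * c1 = d1 * μ2 := by
    calc r * c1 = ∑ b ∈ bs, n (O p) b := by
          rw [Finset.sum_congr rfl (fun b hb => hconst p b hb b0 hb0), Finset.sum_const,
            smul_eq_mul]
      _ = ∑ u ∈ O p, (bs.filter fun b => I u b).card := dc' bs (O p) (fun b u => I u b)
      _ = ∑ u ∈ O p, μ2 := Finset.sum_congr rfl fun u hu => pairct u (neOp u hu)
      _ = d1 * μ2 := by rw [Finset.sum_const, smul_eq_mul]
  have eq2 : r * c2 = d2 * μ2 := by
    calc r * c2 = ∑ b ∈ bs, n (O q) b := by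
          rw [Finset.sum_congr rfl (fun b hb => hconst q b hb b0 hb0), Finset.sum_const,
            smul_eq_mul]
      _ = ∑ u ∈ O q, (bs.filter fun b => I u b).card := dc' bs (O q) (fun b u => I u b)
      _ = ∑ u ∈ O q, μ2 := Finset.sum_congr rfl fun u hu => pairct u (neOq u hu)
      _ = d2 * μ2 := by rw [Finset.sum_const, smul_eq_mul]
  -- eq3 : r * (c1 * c2) = d1 * (d2 * μ3)
  have eq3 : r * (c1 * c2) = d1 * (d2 * μ3) := by
    calc r * (c1 * c2) = ∑ b ∈ bs, n (O p) b * n (O q) b := by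
          rw [Finset.sum_congr rfl
            (fun b hb => by rw [hconst p b hb b0 hb0, hconst q b hb b0 hb0]),
            Finset.sum_const, smul_eq_mul]
      _ = ∑ u ∈ O p, ∑ w ∈ O q, (bs.filter fun b => I u b ∧ I w b).card :=
          prod_count bs (O p) (O q) (fun u b => I u b)
      _ = ∑ u ∈ O p, ∑ w ∈ O q, μ3 := Finset.sum_congr rfl fun u hu =>
          Finset.sum_congr rfl fun w hw => triplect u w (neOp u hu) (neOq w hw)
            (fun he => hdisj u hu (he ▸ hw))
      _ = d1 * (d2 * μ3) := by simp [Finset.sum_const, mul_assoc]; rfl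
  -- eq4 : diagonal
  have eq4 : r * (c1 * c1) = d1 * (μ2 + (d1 - 1) * μ3) := by
    calc r * (c1 * c1) = ∑ b ∈ bs, n (O p) b * n (O p) b := by
          rw [Finset.sum_congr rfl
            (fun b hb => by rw [hconst p b hb b0 hb0]), Finset.sum_const, smul_eq_mul]
      _ = ∑ u ∈ O p, ∑ w ∈ O p, (bs.filter fun b => I u b ∧ I w b).card :=
          prod_count bs (O p) (O p) (fun u b => I u b)
      _ = ∑ u ∈ O p, (μ2 + (d1 - 1) * μ3) := by
          refine Finset.sum_congr rfl fun u hu => ?_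
          rw [← Finset.add_sum_erase _ _ hu]
          congr 1
          · have : (bs.filter fun b => I u b ∧ I u b) = bs.filter fun b => I u b := by
              simp
            rw [this, pairct u (neOp u hu)]
          · rw [Finset.sum_congr rfl (fun w hw => triplect u w (neOp u hu)
              (neOp w (Finset.mem_of_mem_erase hw))
              (fun he => (Finset.mem_erase.mp hw).1 he.symm)),
              Finset.sum_const, smul_eq_mul, Finset.card_erase_of_mem hu]
      _ = d1 * (μ2 + (d1 - 1) * μ3) := by rw [Finset.sum_const, smul_eq_mul]
  -- arithmetic contradiction
  have key1 : (d1 * d2) * (μ2 * μ2) = (d1 * d2) * (r * μ3) := by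
    calc (d1 * d2) * (μ2 * μ2) = (d1 * μ2) * (d2 * μ2) := by ring
      _ = (r * c1) * (r * c2) := by rw [eq1, eq2]
      _ = r * (r * (c1 * c2)) := by ring
      _ = r * (d1 * (d2 * μ3)) := by rw [eq3]
      _ = (d1 * d2) * (r * μ3) := by ring
  have k1 : μ2 * μ2 = r * μ3 := Nat.eq_of_mul_eq_mul_left (Nat.mul_pos hd1 hd2) key1
  have key2 : (r * d1) * (d1 * μ3) = (r * d1) * (μ2 + (d1 - 1) * μ3) := by
    calc (r * d1) * (d1 * μ3) = d1 * (d1 * (r * μ3)) := by ring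
      _ = d1 * (d1 * (μ2 * μ2)) := by rw [k1]
      _ = (d1 * μ2) * (d1 * μ2) := by ring
      _ = (r * c1) * (r * c1) := by rw [eq1]
      _ = r * (r * (c1 * c1)) := by ring
      _ = r * (d1 * (μ2 + (d1 - 1) * μ3)) := by rw [eq4]
      _ = (r * d1) * (μ2 + (d1 - 1) * μ3) := by ring
  have k2 : d1 * μ3 = μ2 + (d1 - 1) * μ3 :=
    Nat.eq_of_mul_eq_mul_left (Nat.mul_pos hr hd1) key2
  have k3 : μ2 = μ3 := by
    obtain ⟨e, he⟩ : ∃ e, d1 = e + 1 := ⟨d1 - 1, by omega⟩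
    rw [he] at k2
    have h1 : (e + 1) * μ3 = μ3 + e * μ3 := by ring
    have h2' : (e + 1 - 1) * μ3 = e * μ3 := by simp
    rw [h1, h2'] at k2
    omega
  rw [k3] at hrel
  have : (k - 2) * μ3 < (v - 2) * μ3 := by
    apply Nat.mul_lt_mul_of_lt_of_le (by omega) (le_refl μ3) hμ3
  omega

/-- If G acts flag-transitively on a non-trivial t-(v,k,λ) design with t ≥ 3,
then G acts 2-transitively on points. -/
theorem stmt14 {X B : Type*} [Fintype X] [Fintype B] (I : X → B → Prop)
    [∀ x b, Decidable (I x b)] {t v k l : ℕ} (hD : IsDesign X B I t v k l)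
    (ht : 3 ≤ t) (hk : t < k) (hv : k < v)
    (G : Type*) [Group G] [MulAction G X] [MulAction G B]
    (hinc : ∀ (g : G) (x : X) (b : B), I x b ↔ I (g • x) (g • b))
    (hft : ∀ (x : X) (b : B) (x' : X) (b' : B), I x b → I x' b' →
      ∃ g : G, g • x = x' ∧ g • b = b') :
    ∀ (x y x' y' : X), x ≠ y → x' ≠ y' →
      ∃ g : G, g • x = x' ∧ g • y = y' := by
  classical
  obtain ⟨ht0, htk, hkv, hl, hcard, hblk, hdes⟩ := hD
  have hblkN : ∀ b : B, Nat.card {x : X // I x b} = k := fun b => (cnt_eq _).trans (hblk b)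
  have hdesN : ∀ S : Finset X, S.card = t → Nat.card {b : B // ∀ x ∈ S, I x b} = l :=
    fun S hS => (@cnt_eq B _ (fun b => ∀ x ∈ S, I x b) (fun _ => decidableDforallFinset)).trans (hdes S hS)
  have hcc := const_count I hcard hblkN htk hkv hl hdesN
  obtain ⟨μ3, hμ3, h3⟩ := hcc (t - 3) (by omega)
  have h3' : ∀ S : Finset X, S.card = 3 → Nat.card {b : B // ∀ x ∈ S, I x b} = μ3 :=
    fun S hS => h3 S (by omega)
  obtain ⟨μ2, hμ2, h2⟩ := hcc (t - 2) (by omega)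
  have h2' : ∀ S : Finset X, S.card = 2 → Nat.card {b : B // ∀ x ∈ S, I x b} = μ2 :=
    fun S hS => h2 S (by omega)
  have hstep := step_down I hcard hblkN (s := 2) (μ := μ3) (fun S hS => h3' S hS)
  obtain ⟨S0, _, hS0⟩ := Finset.exists_subset_card_eq
    (show 2 ≤ (Finset.univ : Finset X).card by rw [Finset.card_univ, hcard]; omega)
  have hrel : (k - 2) * μ2 = (v - 2) * μ3 := by
    have := hstep S0 hS0
    rwa [h2' S0 hS0] at this
  have exblock : ∀ w : X, ∃ b : B, I w b := by
    intro w
    have h1lt : 1 < Fintype.card X := by rw [hcard]; omega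
    obtain ⟨w', hw'⟩ := Fintype.exists_ne_of_one_lt_card h1lt w
    have hcard2 : ({w, w'} : Finset X).card = 2 := by
      classical
      exact Finset.card_pair (Ne.symm hw')
    have hpos : 0 < Nat.card {b : B // ∀ x ∈ ({w, w'} : Finset X), I x b} := by
      rw [h2' _ hcard2]; exact hμ2
    obtain ⟨⟨b, hb⟩⟩ := (Nat.card_pos_iff.mp hpos).1
    exact ⟨b, hb w (by simp)⟩
  have htrans : ∀ a c : X, ∃ g : G, g • a = c := by
    intro a c
    obtain ⟨b, hb⟩ := exblock a
    obtain ⟨b', hb'⟩ := exblock c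
    obtain ⟨g, hg, -⟩ := hft a b c b' hb hb'
    exact ⟨g, hg⟩
  intro x y x' y' hxy hx'y'
  obtain ⟨g1, hg1⟩ := htrans x x'
  have hy1 : g1 • y ≠ x' := by
    intro h
    have hyx : g1 • y = g1 • x := by rw [h, hg1]
    exact hxy (MulAction.injective g1 hyx).symm
  obtain ⟨g2, hg2a, hg2b⟩ := stab_trans I hμ2 hμ3 h2' h3' hrel (by omega) hv hinc hft
    x' (g1 • y) y' hy1 (Ne.symm hx'y')
  exact ⟨g2 * g1, by rw [mul_smul, hg1, hg2a], by rw [mul_smul, hg2b]⟩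
end
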